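/- arXiv:1609.05482 — 7 statements merged into one kernel-verified Lean document; each statement's English description precedes it below -/
import Mathlib

section
/- For a Tychonoff space X the following conditions are equivalent: (1) X has countable separation; (2) for every Tychonoff space Y containing X as a subspace there exists a countable family 𝒰 of open subsets of Y such that for any points x ∈ X and y ∈ Y \ X some U ∈ 𝒰 contains exactly one point of {x, y}; (3) there exists some Tychonoff space Y with countable separation containing X as a subspace together with a countable family 𝒰 of open subsets of Y such that for any points x ∈ X and y ∈ Y \ X some U ∈ 𝒰 contains exactly one point of {x, y}. -/
open Topology Set

universe u v

/-- `f` is quasicontinuous at `x`. -/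
def QuasiContinuousAt {X : Type*} {Y : Type*} [TopologicalSpace X] [TopologicalSpace Y]
    (f : X → Y) (x : X) : Prop :=
  ∀ Ox ∈ nhds x, ∀ Oy ∈ nhds (f x),
    ∃ U : Set X, IsOpen U ∧ U.Nonempty ∧ U ⊆ Ox ∧ f '' U ⊆ Oy

/-- `f` is quasicontinuous. -/
def QuasiContinuous {X Y : Type*} [TopologicalSpace X] [TopologicalSpace Y] (f : X → Y) : Prop :=
  ∀ x, QuasiContinuousAt f x

/-- The set of continuity points of a map. -/
def ContinuityPoints {Z X : Type*} [TopologicalSpace Z] [TopologicalSpace X] (f : Z → X) :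
    Set Z :=
  {z | ContinuousAt f z}

/-- A multivalued map (represented as `Φ : Z → Set X`) is usco if it has nonempty compact
values and is upper semicontinuous. -/
def IsUsco {Z X : Type*} [TopologicalSpace Z] [TopologicalSpace X] (Φ : Z → Set X) : Prop :=
  (∀ z, (Φ z).Nonempty) ∧ (∀ z, IsCompact (Φ z)) ∧
    ∀ U : Set X, IsOpen U → IsOpen {z | Φ z ⊆ U}

/-- A minimal usco map. -/
def IsMinimalUsco {Z X : Type*} [TopologicalSpace Z] [TopologicalSpace X] (Φ : Z → Set X) :
    Prop :=
  IsUsco Φ ∧ ∀ Ψ : Z → Set X, IsUsco Ψ → (∀ z, Ψ z ⊆ Φ z) → Ψ = Φ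

/-- `Φ` is single-valued at `z`. -/
def SingleValuedAt {Z X : Type*} (Φ : Z → Set X) (z : Z) : Prop := ∃ x, Φ z = {x}

/-- A class of topological spaces (in universe `u`). -/
def SpaceClass : Type (u + 1) := ∀ Z : Type u, TopologicalSpace Z → Prop

/-- All members of the class are Baire spaces. -/
def IsBaireClass (P : SpaceClass.{u}) : Prop :=
  ∀ (Z : Type u) [tZ : TopologicalSpace Z], P Z tZ → BaireSpace Z

/-- The class is closed under taking open subspaces. -/
def ClosedUnderOpenSubspaces (P : SpaceClass.{u}) : Prop :=
  ∀ (Z : Type u) [tZ : TopologicalSpace Z], P Z tZ →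
    ∀ U : Set Z, IsOpen U → P ↥U inferInstance

/-- The class is closed under taking dense `Gδ`-subspaces. -/
def ClosedUnderDenseGdelta (P : SpaceClass.{u}) : Prop :=
  ∀ (Z : Type u) [tZ : TopologicalSpace Z], P Z tZ →
    ∀ S : Set Z, Dense S → IsGδ S → P ↥S inferInstance

/-- The class is closed under taking dense Baire subspaces. -/
def ClosedUnderDenseBaire (P : SpaceClass.{u}) : Prop :=
  ∀ (Z : Type u) [tZ : TopologicalSpace Z], P Z tZ →
    ∀ S : Set Z, Dense S → BaireSpace ↥S → P ↥S inferInstance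

/-- `X` is `𝒞`-Piotrowski: every quasicontinuous map from a nonempty member of the class `𝒞`
to `X` has a continuity point. -/
def IsPiotrowskiFor (P : SpaceClass.{u}) (X : Type v) [TopologicalSpace X] : Prop :=
  ∀ (Z : Type u) [tZ : TopologicalSpace Z], P Z tZ → Nonempty Z →
    ∀ f : Z → X, QuasiContinuous f → ∃ z, ContinuousAt f z

/-- `X` is strong `𝒞`-Piotrowski: for every quasicontinuous map from a member of `𝒞` to `X`
the set of continuity points is comeager. -/
def IsStrongPiotrowskiFor (P : SpaceClass.{u}) (X : Type v) [TopologicalSpace X] : Prop :=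
  ∀ (Z : Type u) [tZ : TopologicalSpace Z], P Z tZ →
    ∀ f : Z → X, QuasiContinuous f → ContinuityPoints f ∈ residual Z

/-- `X` is `𝒞`-Stegall. -/
def IsStegallFor (P : SpaceClass.{u}) (X : Type v) [TopologicalSpace X] : Prop :=
  ∀ (Z : Type u) [tZ : TopologicalSpace Z], P Z tZ → Nonempty Z →
    ∀ Φ : Z → Set X, IsMinimalUsco Φ → ∃ z, SingleValuedAt Φ z

/-- `X` is strong `𝒞`-Stegall. -/
def IsStrongStegallFor (P : SpaceClass.{u}) (X : Type v) [TopologicalSpace X] : Prop :=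
  ∀ (Z : Type u) [tZ : TopologicalSpace Z], P Z tZ →
    ∀ Φ : Z → Set X, IsMinimalUsco Φ → {z | SingleValuedAt Φ z} ∈ residual Z

/-- The class of all Baire spaces (in universe `u`). -/
def BaireClass : SpaceClass.{u} := fun Z tZ => @BaireSpace Z tZ

/-- `X` is Piotrowski. -/
def IsPiotrowski (X : Type v) [TopologicalSpace X] : Prop :=
  IsPiotrowskiFor BaireClass.{u} X

/-- `d` is a metric on `X` (not necessarily related to the topology of `X`). -/
structure IsMetric {X : Type*} (d : X → X → ℝ) : Prop where
  self : ∀ x, d x x = 0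
  eq_of : ∀ x y, d x y = 0 → x = y
  symm : ∀ x y, d x y = d y x
  triangle : ∀ x y z, d x z ≤ d x y + d y z

/-- `X` is fragmented by `d`: every nonempty subset has a nonempty relatively open subset of
`d`-diameter `< ε`. -/
def FragmentedBy (X : Type*) [TopologicalSpace X] (d : X → X → ℝ) : Prop :=
  ∀ ε : ℝ, 0 < ε → ∀ A : Set X, A.Nonempty →
    ∃ V : Set X, IsOpen V ∧ (A ∩ V).Nonempty ∧ ∀ x ∈ A ∩ V, ∀ y ∈ A ∩ V, d x y < ε

/-- The topology generated by `d` is finer than the topology of `X`. -/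
def MetricTopFiner (X : Type*) [TopologicalSpace X] (d : X → X → ℝ) : Prop :=
  ∀ U : Set X, IsOpen U → ∀ x ∈ U, ∃ ε : ℝ, 0 < ε ∧ {y | d x y < ε} ⊆ U

/-- `X` is fragmentable. -/
def Fragmentable (X : Type*) [TopologicalSpace X] : Prop :=
  ∃ d : X → X → ℝ, IsMetric d ∧ FragmentedBy X d

/-- `X` is strictly fragmented by the metric `d`. -/
def StrictlyFragmentedBy (X : Type*) [TopologicalSpace X] (d : X → X → ℝ) : Prop :=
  IsMetric d ∧ FragmentedBy X d ∧ MetricTopFiner X d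

/-- `X` is strictly fragmentable. -/
def StrictlyFragmentable (X : Type*) [TopologicalSpace X] : Prop :=
  ∃ d : X → X → ℝ, StrictlyFragmentedBy X d

/-- The countable family `𝒰` separates the points of `S` from the points of `Sᶜ`:
some member of the family contains exactly one point of any pair `x ∈ S`, `y ∉ S`. -/
def SeparatesFrom {K : Type*} (𝒰 : ℕ → Set K) (S : Set K) : Prop :=
  ∀ x ∈ S, ∀ y ∈ Sᶜ, ∃ n, (x ∈ 𝒰 n ∧ y ∉ 𝒰 n) ∨ (x ∉ 𝒰 n ∧ y ∈ 𝒰 n)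

/-- `X` has countable separation: some compactification `K` of `X` carries a countable family
of open sets separating the points of (the copy of) `X` from the points of `K \ X`. -/
def HasCountableSeparation (X : Type u) [TopologicalSpace X] : Prop :=
  ∃ (K : Type u) (tK : TopologicalSpace K), @CompactSpace K tK ∧ @T2Space K tK ∧
    ∃ e : X → K, @Topology.IsEmbedding X K _ tK e ∧ @DenseRange K tK X e ∧
      ∃ 𝒰 : ℕ → Set K, (∀ n, @IsOpen K tK (𝒰 n)) ∧ SeparatesFrom 𝒰 (Set.range e)

section AuxCS

open Filter Topology

/-- Reindex a countable separating family by `ℕ`. -/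
lemma SeparatesFrom.reindex {K : Type*} [TopologicalSpace K] {S : Set K} {ι : Type*}
    [Countable ι] [Nonempty ι] (𝒰 : ι → Set K) (ho : ∀ i, IsOpen (𝒰 i))
    (hs : ∀ x ∈ S, ∀ y ∈ Sᶜ, ∃ i, (x ∈ 𝒰 i ∧ y ∉ 𝒰 i) ∨ (x ∉ 𝒰 i ∧ y ∈ 𝒰 i)) :
    ∃ 𝒱 : ℕ → Set K, (∀ n, IsOpen (𝒱 n)) ∧ SeparatesFrom 𝒱 S := by
  obtain ⟨f, hf⟩ := exists_surjective_nat ι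
  refine ⟨fun n => 𝒰 (f n), fun n => ho _, fun x hx y hy => ?_⟩
  obtain ⟨i, hi⟩ := hs x hx y hy
  obtain ⟨n, rfl⟩ := hf i
  exact ⟨n, hi⟩

/-- If `(i x, z)` is in the closure of the "diagonal" of the pair of maps `(i, j)` with `i`
inducing, `j` continuous to a Hausdorff space, then `z = j x`. -/
lemma eq_of_mem_closure_range_pair {X K Z : Type*} [TopologicalSpace X] [TopologicalSpace K]
    [TopologicalSpace Z] [T2Space Z] {i : X → K} {j : X → Z} (hi : Topology.IsInducing i)
    (hj : Continuous j) {x : X} {z : Z}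
    (h : (i x, z) ∈ closure (Set.range fun a => (i a, j a))) : z = j x := by
  set g : X → K × Z := fun a => (i a, j a) with hg
  have hne : NeBot (comap g (𝓝 (i x, z))) := by
    rw [comap_neBot_iff]
    intro t ht
    obtain ⟨p, hp1, hp2⟩ := mem_closure_iff_nhds.mp h t ht
    obtain ⟨a, rfl⟩ := hp2
    exact ⟨a, hp1⟩
  have hcom : comap g (𝓝 (i x, z)) = comap i (𝓝 (i x)) ⊓ comap j (𝓝 z) := by
    rw [nhds_prod_eq, comap_prod]
    rfl
  have h1 : comap g (𝓝 (i x, z)) ≤ 𝓝 x := by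
    rw [hcom, hi.nhds_eq_comap x]
    exact inf_le_left
  have h2 : map j (comap g (𝓝 (i x, z))) ≤ 𝓝 z := by
    rw [hcom]
    exact (map_mono inf_le_right).trans map_comap_le
  have h3 : map j (comap g (𝓝 (i x, z))) ≤ 𝓝 (j x) := (map_mono h1).trans (hj.tendsto x)
  haveI : NeBot (map j (comap g (𝓝 (i x, z)))) := hne.map j
  exact (eq_of_nhds_neBot (neBot_of_le (le_inf h3 h2))).symm

/-- Transfer of a countable separating family from one compact Hausdorff space containing `X`
to any other compact Hausdorff space containing `X`. -/
lemma sep_transfer {X K Z : Type*} [TopologicalSpace X] [TopologicalSpace K] [TopologicalSpace Z]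
    [CompactSpace K] [T2Space K] [CompactSpace Z] [T2Space Z]
    {i : X → K} {j : X → Z} (hi : Topology.IsEmbedding i) (hj : Topology.IsEmbedding j)
    {𝒰 : ℕ → Set K} (ho : ∀ n, IsOpen (𝒰 n)) (hsep : SeparatesFrom 𝒰 (Set.range i)) :
    ∃ 𝒱 : ℕ → Set Z, (∀ n, IsOpen (𝒱 n)) ∧ SeparatesFrom 𝒱 (Set.range j) := by
  classical
  set g : X → K × Z := fun a => (i a, j a) with hg
  set T : Set (K × Z) := closure (Set.range g) with hTdef
  have hT_of : ∀ x : X, (i x, j x) ∈ T := fun x => subset_closure ⟨x, rfl⟩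
  have key1 : ∀ (x : X) (z : Z), (i x, z) ∈ T → z = j x := fun x z h =>
    eq_of_mem_closure_range_pair hi.toIsInducing hj.continuous h
  have key2 : ∀ (x : X) (k : K), (k, j x) ∈ T → k = i x := by
    intro x k h
    have himg := (Homeomorph.prodComm K Z).image_closure (Set.range g)
    have h' : (j x, k) ∈ closure (Set.range fun a => (j a, i a)) := by
      have hmem : ((j x, k) : Z × K) ∈ Homeomorph.prodComm K Z '' closure (Set.range g) :=
        ⟨(k, j x), h, rfl⟩
      rw [himg] at hmem
      have hrange : (Homeomorph.prodComm K Z) '' Set.range g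
          = Set.range fun a => (j a, i a) := by
        ext p
        constructor
        · rintro ⟨q, ⟨a, rfl⟩, rfl⟩
          exact ⟨a, rfl⟩
        · rintro ⟨a, rfl⟩
          exact ⟨(i a, j a), ⟨a, rfl⟩, rfl⟩
      rwa [hrange] at hmem
    exact eq_of_mem_closure_range_pair hj.toIsInducing hi.continuous h'
  set W : Finset ℕ → Set K := fun s => ⋃ n ∈ s, 𝒰 n with hW
  set V : Finset ℕ → Set Z := fun s => {z | ∀ k, (k, z) ∈ T → k ∈ W s} with hV
  have hVopen : ∀ s, IsOpen (V s) := by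
    intro s
    rw [← isClosed_compl_iff]
    have hcompl : (V s)ᶜ = Prod.snd '' (T ∩ (W s)ᶜ ×ˢ (Set.univ : Set Z)) := by
      ext z
      constructor
      · intro h
        simp only [Set.mem_compl_iff, hV, Set.mem_setOf_eq] at h
        push_neg at h
        obtain ⟨k, hk1, hk2⟩ := h
        exact ⟨(k, z), ⟨hk1, hk2, Set.mem_univ _⟩, rfl⟩
      · rintro ⟨⟨k, z'⟩, ⟨h1, h2, -⟩, rfl⟩
        intro h
        exact h2 (h k h1)
    rw [hcompl]
    have hWs : IsOpen (W s) := isOpen_biUnion fun n _ => ho n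
    exact ((isClosed_closure.isCompact.inter_right
      (hWs.isClosed_compl.prod isClosed_univ)).image continuous_snd).isClosed
  have hVsep : ∀ x ∈ Set.range j, ∀ y ∈ (Set.range j)ᶜ,
      ∃ s : Finset ℕ, (x ∈ V s ∧ y ∉ V s) ∨ (x ∉ V s ∧ y ∈ V s) := by
    rintro _ ⟨a, rfl⟩ y hy
    by_cases hA : ∃ k, (k, y) ∈ T ∧ ∃ n, i a ∈ 𝒰 n ∧ k ∉ 𝒰 n
    · obtain ⟨k, hkT, n, hin, hkn⟩ := hA
      refine ⟨{n}, Or.inl ⟨?_, ?_⟩⟩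
      · intro k' hk'
        rw [key2 a k' hk']
        exact Set.mem_biUnion (Finset.mem_singleton_self n) hin
      · intro h
        have h2 := h k hkT
        rw [hW] at h2
        simp only [Finset.mem_singleton, Set.mem_iUnion, exists_prop] at h2
        obtain ⟨m, rfl, hm⟩ := h2
        exact hkn hm
    · push_neg at hA
      set C : Set K := {k | (k, y) ∈ T} with hC
      have hCclosed : IsClosed C :=
        isClosed_closure.preimage (continuous_id.prodMk continuous_const)
      have hcov : C ⊆ ⋃ m : {n // i a ∉ 𝒰 n}, 𝒰 m := by
        intro k hk
        have hknotin : k ∉ Set.range i := by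
          rintro ⟨b, rfl⟩
          exact hy ⟨b, (key1 b y hk).symm⟩
        obtain ⟨n, hn⟩ := hsep (i a) ⟨a, rfl⟩ k hknotin
        rcases hn with ⟨h1, h2⟩ | ⟨h1, h2⟩
        · exact absurd (hA k hk n h1) h2
        · exact Set.mem_iUnion.mpr ⟨⟨n, h1⟩, h2⟩
      obtain ⟨t, ht⟩ := hCclosed.isCompact.elim_finite_subcover
        (fun m : {n // i a ∉ 𝒰 n} => 𝒰 m) (fun m => ho m) hcov
      refine ⟨t.image Subtype.val, Or.inr ⟨?_, ?_⟩⟩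
      · intro h
        have h2 := h (i a) (hT_of a)
        rw [hW] at h2
        simp only [Set.mem_iUnion, exists_prop, Finset.mem_image] at h2
        obtain ⟨n, ⟨m, hm, rfl⟩, hn2⟩ := h2
        exact m.2 hn2
      · intro k hk
        have h2 := ht hk
        simp only [Set.mem_iUnion, exists_prop] at h2
        obtain ⟨m, hm, hkm⟩ := h2
        rw [hW]
        simp only [Set.mem_iUnion, exists_prop, Finset.mem_image]
        exact ⟨m.1, ⟨m, hm, rfl⟩, hkm⟩
  exact SeparatesFrom.reindex V hVopen hVsep

/-- For a Tychonoff space, the unit of the Stone–Čech compactification is an embedding. -/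
lemma isEmbedding_stoneCechUnit' {Y : Type*} [TopologicalSpace Y] [T35Space Y] :
    Topology.IsEmbedding (stoneCechUnit : Y → StoneCech Y) := by
  refine ⟨Topology.isInducing_iff_nhds.mpr fun x => ?_, injective_stoneCechUnit_of_t35Space⟩
  refine le_antisymm (continuous_stoneCechUnit.tendsto x).le_comap ?_
  intro s hs
  obtain ⟨U, hUs, hU, hxU⟩ := mem_nhds_iff.mp hs
  obtain ⟨f, hf, hf0, hf1⟩ := CompletelyRegularSpace.completely_regular x Uᶜ
    hU.isClosed_compl (by simpa using hxU)
  have hext := stoneCechExtend_extends hf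
  refine Filter.mem_comap.mpr ⟨stoneCechExtend hf ⁻¹' ({1}ᶜ), ?_, ?_⟩
  · refine (isClosed_singleton.isOpen_compl.preimage (continuous_stoneCechExtend hf)).mem_nhds ?_
    have : stoneCechExtend hf (stoneCechUnit x) = f x := congrFun hext x
    rw [Set.mem_preimage, this, hf0]
    intro h01
    have := congrArg Subtype.val (h01 : (0 : unitInterval) = 1)
    norm_num at this
  · intro y hy
    refine hUs (by_contra fun hyU => ?_)
    have h1 : stoneCechExtend hf (stoneCechUnit y) = f y := congrFun hext y
    have h2 : f y = 1 := hf1 hyU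
    exact hy (by rw [h1, h2]; rfl)

/-- From a countable separating family in a compact Hausdorff space containing `X` we get
countable separation for `X` (passing to the closure). -/
lemma hasCountableSeparation_of_embedding {X : Type u} [TopologicalSpace X]
    {Z : Type u} [TopologicalSpace Z] [CompactSpace Z] [T2Space Z]
    {j : X → Z} (hj : Topology.IsEmbedding j)
    {𝒱 : ℕ → Set Z} (ho : ∀ n, IsOpen (𝒱 n)) (hsep : SeparatesFrom 𝒱 (Set.range j)) :
    HasCountableSeparation X := by
  classical
  set Kc : Set Z := closure (Set.range j) with hKc
  have hmem : ∀ x : X, j x ∈ Kc := fun x => subset_closure ⟨x, rfl⟩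
  set e : X → Kc := fun x => ⟨j x, hmem x⟩ with he
  have hje : Topology.IsEmbedding e := hj.codRestrict Kc hmem
  have hval : Subtype.val '' Set.range e = Set.range j := by
    ext z
    constructor
    · rintro ⟨q, ⟨a, rfl⟩, rfl⟩
      exact ⟨a, rfl⟩
    · rintro ⟨a, rfl⟩
      exact ⟨e a, ⟨a, rfl⟩, rfl⟩
  refine ⟨Kc, inferInstance, isCompact_iff_compactSpace.mp isClosed_closure.isCompact,
    inferInstance, e, hje, ?_, fun n => Subtype.val ⁻¹' 𝒱 n,
    fun n => (ho n).preimage continuous_subtype_val, ?_⟩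
  · intro z
    rw [closure_subtype, hval]
    exact z.2
  · rintro _ ⟨a, rfl⟩ y hy
    have hyr : (y : Z) ∉ Set.range j := by
      rintro ⟨b, hb⟩
      exact hy ⟨b, Subtype.ext hb⟩
    obtain ⟨n, hn⟩ := hsep (j a) ⟨a, rfl⟩ (y : Z) hyr
    exact ⟨n, hn⟩

/-- Countable separation transfers to a separating family in any Tychonoff superspace. -/
lemma HasCountableSeparation.sep_forall {X : Type u} [TopologicalSpace X]
    (h : HasCountableSeparation X) :
    ∀ (Y : Type u) (tY : TopologicalSpace Y), @T35Space Y tY →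
      ∀ e : X → Y, @Topology.IsEmbedding X Y _ tY e →
        ∃ 𝒰 : ℕ → Set Y, (∀ n, @IsOpen Y tY (𝒰 n)) ∧ SeparatesFrom 𝒰 (Set.range e) := by
  obtain ⟨K, tK, hcomp, ht2, i, hi, hdense, 𝒰, ho, hsep⟩ := h
  intro Y tY htY e he
  letI := tK
  haveI := hcomp
  haveI := ht2
  letI := tY
  haveI := htY
  have hu : Topology.IsEmbedding (stoneCechUnit : Y → StoneCech Y) := isEmbedding_stoneCechUnit'
  have hj : Topology.IsEmbedding (fun x => stoneCechUnit (e x) : X → StoneCech Y) :=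
    hu.comp he
  obtain ⟨𝒱, hVo, hVsep⟩ := sep_transfer hi hj ho hsep
  refine ⟨fun n => stoneCechUnit ⁻¹' 𝒱 n, fun n => (hVo n).preimage continuous_stoneCechUnit,
    ?_⟩
  rintro _ ⟨a, rfl⟩ y hy
  have hy' : stoneCechUnit y ∉ Set.range (fun x => stoneCechUnit (e x) : X → StoneCech Y) := by
    rintro ⟨b, hb⟩
    exact hy ⟨b, hu.injective hb⟩
  obtain ⟨n, hn⟩ := hVsep (stoneCechUnit (e a)) ⟨a, rfl⟩ (stoneCechUnit y) hy'
  exact ⟨n, hn⟩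

end AuxCS

/-- For a Tychonoff space `X` the following are equivalent:
(1) `X` has countable separation;
(2) for every Tychonoff space `Y` containing `X` (i.e. for every topological embedding
    `e : X → Y`) there is a countable family of open subsets of `Y` separating the points of
    (the copy of) `X` from the points of `Y \ X`;
(3) for some Tychonoff space `Y` with countable separation containing `X` there is such a
    countable family. -/
theorem hasCountableSeparation_tfae (X : Type u) [TopologicalSpace X] [T35Space X] :
    (HasCountableSeparation X ↔
      (∀ (Y : Type u) (tY : TopologicalSpace Y), @T35Space Y tY →
        ∀ e : X → Y, @Topology.IsEmbedding X Y _ tY e →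
          ∃ 𝒰 : ℕ → Set Y, (∀ n, @IsOpen Y tY (𝒰 n)) ∧ SeparatesFrom 𝒰 (Set.range e))) ∧
    (HasCountableSeparation X ↔
      (∃ (Y : Type u) (tY : TopologicalSpace Y), @T35Space Y tY ∧
        @HasCountableSeparation Y tY ∧
        ∃ e : X → Y, @Topology.IsEmbedding X Y _ tY e ∧
          ∃ 𝒰 : ℕ → Set Y, (∀ n, @IsOpen Y tY (𝒰 n)) ∧ SeparatesFrom 𝒰 (Set.range e))) := by
  constructor
  · constructor
    · exact fun h => h.sep_forall
    · intro h2
      obtain ⟨𝒰, ho, hsep⟩ := h2 (StoneCech X) inferInstance inferInstance stoneCechUnit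
        isEmbedding_stoneCechUnit'
      exact ⟨StoneCech X, inferInstance, inferInstance, inferInstance, stoneCechUnit,
        isEmbedding_stoneCechUnit', denseRange_stoneCechUnit, 𝒰, ho, hsep⟩
  · constructor
    · intro h
      refine ⟨X, ‹TopologicalSpace X›, ‹T35Space X›, h, id, Topology.IsEmbedding.id,
        fun _ => ∅, fun _ => isOpen_empty, ?_⟩
      intro x hx y hy
      simp [Set.range_id] at hy
    · rintro ⟨Y, tY, htY, hYcs, e, he, 𝒰, ho, hsep⟩
      letI := tY
      haveI := htY
      obtain ⟨𝒲, hWo, hWsep⟩ := hYcs.sep_forall (StoneCech Y) inferInstance inferInstance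
        stoneCechUnit isEmbedding_stoneCechUnit'
      have hu : Topology.IsEmbedding (stoneCechUnit : Y → StoneCech Y) :=
        isEmbedding_stoneCechUnit'
      have hj : Topology.IsEmbedding (fun x => stoneCechUnit (e x) : X → StoneCech Y) :=
        hu.comp he
      choose O hOo hOp using fun n => hu.toIsInducing.isOpen_iff.mp (ho n)
      have hmemO : ∀ (n : ℕ) (y : Y), stoneCechUnit y ∈ O n ↔ y ∈ 𝒰 n := by
        intro n y
        rw [← hOp n]
        rfl
      have hcomb : ∀ x ∈ Set.range (fun x => stoneCechUnit (e x) : X → StoneCech Y),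
          ∀ z ∈ (Set.range (fun x => stoneCechUnit (e x) : X → StoneCech Y))ᶜ,
          ∃ m : ℕ ⊕ ℕ, (x ∈ Sum.elim O 𝒲 m ∧ z ∉ Sum.elim O 𝒲 m) ∨
            (x ∉ Sum.elim O 𝒲 m ∧ z ∈ Sum.elim O 𝒲 m) := by
        rintro _ ⟨a, rfl⟩ z hz
        by_cases hz' : z ∈ Set.range (stoneCechUnit : Y → StoneCech Y)
        · obtain ⟨b, rfl⟩ := hz'
          have hbe : b ∉ Set.range e := by
            rintro ⟨c, rfl⟩
            exact hz ⟨c, rfl⟩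
          obtain ⟨n, hn⟩ := hsep (e a) ⟨a, rfl⟩ b hbe
          refine ⟨Sum.inl n, ?_⟩
          rcases hn with ⟨h1, h2⟩ | ⟨h1, h2⟩
          · exact Or.inl ⟨(hmemO n (e a)).mpr h1, fun hb => h2 ((hmemO n b).mp hb)⟩
          · exact Or.inr ⟨fun hb => h1 ((hmemO n (e a)).mp hb), (hmemO n b).mpr h2⟩
        · obtain ⟨m, hm⟩ := hWsep (stoneCechUnit (e a)) ⟨e a, rfl⟩ z hz'
          exact ⟨Sum.inr m, hm⟩
      obtain ⟨𝒞, hCo, hCsep⟩ := SeparatesFrom.reindex (Sum.elim O 𝒲)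
        (fun m => by cases m with
          | inl n => exact hOo n
          | inr n => exact hWo n) hcomb
      exact hasCountableSeparation_of_embedding hj hCo hCsep
end

section
/- For every compact Hausdorff space K, the family of all subspaces of K having countable separation is a {-1,1}^ω-algebra of subsets of K containing all open subsets of K. Consequently this family is a σ-algebra containing all Borel subsets of K and closed under the Suslin A-operation. -/
open Topology Set

universe u v

/-- `b • A` where `b : Bool` encodes an element of `{-1, 1}`: `true • A = A` and
`false • A = Aᶜ`. -/
def SignedSet {K : Type*} (b : Bool) (A : Set K) : Set K := if b then A else Aᶜ

/-- A family `𝒜` of subsets of `K` is a `{-1,1}^ω`-algebra: it is closed under all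
`Ω`-operations `(A n) ↦ ⋃_{f ∈ Ω} ⋂ n, f n • A n` with `Ω ⊆ {-1,1}^ω`. -/
def IsSignAlgebra {K : Type*} (𝒜 : Set (Set K)) : Prop :=
  ∀ A : ℕ → Set K, (∀ n, A n ∈ 𝒜) → ∀ Ω : Set (ℕ → Bool),
    (⋃ f ∈ Ω, ⋂ n, SignedSet (f n) (A n)) ∈ 𝒜

/-- The family of all subspaces of `K` with countable separation. -/
def csFamily (K : Type u) [TopologicalSpace K] : Set (Set K) :=
  {A : Set K | HasCountableSeparation ↥A}

section Aux

variable {K : Type u} [TopologicalSpace K]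

/-- `A` is separated from its complement by a countable family of open sets of `K`. -/
def GoodFam (A : Set K) : Prop :=
  ∃ 𝒰 : ℕ → Set K, (∀ n, IsOpen (𝒰 n)) ∧ SeparatesFrom 𝒰 A

lemma goodFam_of_isOpen {A : Set K} (h : IsOpen A) : GoodFam A :=
  ⟨fun _ => A, fun _ => h, fun x hx y hy => ⟨0, Or.inl ⟨hx, hy⟩⟩⟩

lemma goodFam_compl {A : Set K} (h : GoodFam A) : GoodFam Aᶜ := by
  obtain ⟨𝒰, ho, hs⟩ := h
  refine ⟨𝒰, ho, fun x hx y hy => ?_⟩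
  rw [compl_compl] at hy
  obtain ⟨n, hn⟩ := hs y hy x hx
  exact ⟨n, hn.elim (fun h => Or.inr ⟨h.2, h.1⟩) (fun h => Or.inl ⟨h.2, h.1⟩)⟩

lemma goodFam_combine {ι : Type} [Encodable ι] (B : ι → Set K) (hB : ∀ i, GoodFam (B i))
    (T : Set K) (hT : ∀ x y, (∀ i, x ∈ B i ↔ y ∈ B i) → x ∈ T → y ∈ T) : GoodFam T := by
  choose 𝒰 hopen hsep using hB
  refine ⟨fun n => (Encodable.decode (α := ι × ℕ) n).elim ∅ (fun p => 𝒰 p.1 p.2), ?_, ?_⟩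
  · intro n
    cases h : Encodable.decode (α := ι × ℕ) n with
    | none => simp [h]
    | some p => simpa [h] using hopen p.1 p.2
  · intro x hx y hy
    by_contra hcon
    have hiff : ∀ i, x ∈ B i ↔ y ∈ B i := by
      intro i
      constructor
      · intro hxB
        by_contra hyB
        obtain ⟨m, hm⟩ := hsep i x hxB y hyB
        exact hcon ⟨Encodable.encode ((i, m) : ι × ℕ), by simpa [Encodable.encodek] using hm⟩
      · intro hyB
        by_contra hxB
        obtain ⟨m, hm⟩ := hsep i y hyB x hxB
        refine hcon ⟨Encodable.encode ((i, m) : ι × ℕ), ?_⟩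
        simp only [Encodable.encodek, Option.elim]
        exact hm.elim (fun h => Or.inr ⟨h.2, h.1⟩) (fun h => Or.inl ⟨h.2, h.1⟩)
    exact hy (hT x y hiff hx)

end Aux

section Main

variable {K : Type u} [TopologicalSpace K] [CompactSpace K] [T2Space K]

lemma cs_of_goodFam {A : Set K} (h : GoodFam A) : A ∈ csFamily K := by
  obtain ⟨𝒰, ho, hs⟩ := h
  have hrange : Set.range (Set.inclusion (subset_closure (s := A))) =
      {x : ↥(closure A) | (x : K) ∈ A} := Set.range_inclusion _
  refine ⟨↥(closure A), inferInstance,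
    isCompact_iff_compactSpace.mp isClosed_closure.isCompact, inferInstance,
    Set.inclusion subset_closure, Topology.IsEmbedding.inclusion _,
    ?_, fun n => Subtype.val ⁻¹' 𝒰 n,
    fun n => (ho n).preimage continuous_subtype_val, ?_⟩
  · -- dense range
    intro x
    rw [hrange]
    rw [closure_subtype]
    have himg : (Subtype.val : ↥(closure A) → K) '' {x : ↥(closure A) | (x : K) ∈ A} = A := by
      ext z
      simp only [Set.mem_image, Set.mem_setOf_eq]
      constructor
      · rintro ⟨w, hw, rfl⟩; exact hw
      · intro hz; exact ⟨⟨z, subset_closure hz⟩, hz, rfl⟩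
    rw [himg]
    exact x.2
  · -- separation
    intro x hx y hy
    rw [hrange] at hx hy
    have hyA : (y : K) ∈ Aᶜ := hy
    exact hs x hx y hyA

end Main

section Hard

variable {K : Type u} [TopologicalSpace K] [CompactSpace K] [T2Space K]

lemma goodFam_of_cs {A : Set K} (h : A ∈ csFamily K) : GoodFam A := by
  obtain ⟨K₂, tK₂, hcomp, ht2, e, he, hd, 𝒱, hVopen, hsep⟩ := h
  letI := tK₂
  haveI := hcomp
  haveI := ht2
  classical
  set g : ↥A → K × K₂ := fun a => ((a : K), e a) with hg
  set F : Set (K × K₂) := closure (Set.range g) with hFdef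
  have hFclosed : IsClosed F := isClosed_closure
  -- fiber over a point of A is a singleton
  have lem1 : ∀ (a : ↥A) (w : K₂), ((a : K), w) ∈ F → w = e a := by
    intro a w hw
    rcases mem_closure_iff_ultrafilter.1 hw with ⟨u, hu, hle⟩
    have hginj : Function.Injective g := fun a b hab => Subtype.ext (congrArg Prod.fst hab)
    set u' : Ultrafilter ↥A := u.comap hginj hu with hu'
    have hmap : Filter.map g ↑u' = ↑u := Filter.map_comap_of_mem hu
    have htg : Filter.Tendsto g ↑u' (𝓝 ((a : K), w)) := hmap.le.trans hle
    have hfst : Filter.Tendsto (fun b : ↥A => (b : K)) ↑u' (𝓝 (a : K)) :=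
      (continuous_fst.tendsto _).comp htg
    have hsnd : Filter.Tendsto e ↑u' (𝓝 w) := (continuous_snd.tendsto _).comp htg
    have hua : ↑u' ≤ 𝓝 a := by
      rw [nhds_induced (Subtype.val : ↥A → K) a]
      exact Filter.map_le_iff_le_comap.1 hfst
    have hee : Filter.Tendsto e ↑u' (𝓝 (e a)) := (he.continuous.tendsto a).mono_left hua
    exact tendsto_nhds_unique hsnd hee
  -- fibers over points outside A avoid the range of e
  have lem2 : ∀ (y : K) (w : K₂), (y, w) ∈ F → w ∈ Set.range e → y ∈ A := by
    intro y w hw hr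
    rcases hr with ⟨a, rfl⟩
    rcases mem_closure_iff_ultrafilter.1 hw with ⟨u, hu, hle⟩
    have hginj : Function.Injective g := fun a b hab => Subtype.ext (congrArg Prod.fst hab)
    set u' : Ultrafilter ↥A := u.comap hginj hu with hu'
    have hmap : Filter.map g ↑u' = ↑u := Filter.map_comap_of_mem hu
    have htg : Filter.Tendsto g ↑u' (𝓝 (y, e a)) := hmap.le.trans hle
    have hfst : Filter.Tendsto (fun b : ↥A => (b : K)) ↑u' (𝓝 y) :=
      (continuous_fst.tendsto _).comp htg
    have hsnd : Filter.Tendsto e ↑u' (𝓝 (e a)) := (continuous_snd.tendsto _).comp htg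
    have hua : ↑u' ≤ 𝓝 a := by
      rw [he.toIsInducing.nhds_eq_comap a]
      exact Filter.map_le_iff_le_comap.1 hsnd
    have hvv : Filter.Tendsto (fun b : ↥A => (b : K)) ↑u' (𝓝 (a : K)) :=
      (continuous_subtype_val.tendsto a).mono_left hua
    have : y = (a : K) := tendsto_nhds_unique hfst hvv
    rw [this]; exact a.2
  -- fibers over the closure of A are nonempty
  have lem3 : ∀ y ∈ closure A, ∃ w : K₂, (y, w) ∈ F := by
    intro y hy
    rcases mem_closure_iff_ultrafilter.1 hy with ⟨u, hu, hle⟩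
    have hrange : Set.range (Subtype.val : ↥A → K) ∈ u := by
      rw [Subtype.range_coe]; exact hu
    set u' : Ultrafilter ↥A := u.comap Subtype.val_injective hrange with hu'
    have hmap : Filter.map (Subtype.val : ↥A → K) ↑u' = ↑u := Filter.map_comap_of_mem hrange
    obtain ⟨w, -, hw⟩ := isCompact_univ.ultrafilter_le_nhds (u'.map e) (by simp)
    refine ⟨w, mem_closure_iff_ultrafilter.2 ⟨u'.map g, ?_, ?_⟩⟩
    · exact Filter.range_mem_map
    · rw [Ultrafilter.coe_map, nhds_prod_eq]
      have h1 : Filter.Tendsto (fun b : ↥A => (b : K)) ↑u' (𝓝 y) := hmap.le.trans hle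
      have h2 : Filter.Tendsto e ↑u' (𝓝 w) := hw
      exact h1.prodMk h2
  -- the "fiber inside U" operation produces open sets
  set G : Set K₂ → Set K := fun U => {z : K | ∀ w : K₂, (z, w) ∈ F → w ∈ U} with hGdef
  have hGopen : ∀ U : Set K₂, IsOpen U → IsOpen (G U) := by
    intro U hU
    rw [← isClosed_compl_iff]
    have hcompl : (G U)ᶜ = Prod.fst '' (F ∩ (Set.univ ×ˢ Uᶜ)) := by
      ext z
      simp only [Set.mem_compl_iff, hGdef, Set.mem_setOf_eq, not_forall, Set.mem_image,
        Set.mem_inter_iff, Set.mem_prod, Set.mem_univ, true_and, Prod.exists]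
      constructor
      · rintro ⟨w, hwF, hwU⟩; exact ⟨z, w, ⟨hwF, hwU⟩, rfl⟩
      · rintro ⟨z', w, ⟨hwF, hwU⟩, rfl⟩; exact ⟨w, hwF, hwU⟩
    rw [hcompl]
    exact (((hFclosed.inter (isClosed_univ.prod hU.isClosed_compl)).isCompact).image
      continuous_fst).isClosed
  -- finite unions of the 𝒱's
  set V : Finset ℕ → Set K₂ := fun s => ⋃ i ∈ s, 𝒱 i with hVdef
  refine ⟨fun n => (Encodable.decode (α := Option (Finset ℕ)) n).elim ∅
    (fun o => o.elim (closure A)ᶜ (fun s => G (V s))), ?_, ?_⟩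
  · intro n
    cases h : Encodable.decode (α := Option (Finset ℕ)) n with
    | none => simp [h]
    | some o =>
      cases o with
      | none => simpa [h] using isClosed_closure.isOpen_compl
      | some s => simpa [h] using hGopen (V s) (isOpen_biUnion fun i _ => hVopen i)
  · intro x hx y hy
    by_cases hyc : y ∈ closure A
    · -- the main case
      set xa : ↥A := ⟨x, hx⟩ with hxa
      obtain ⟨w₀, hw₀⟩ := lem3 y hyc
      set P : Set K₂ := {w : K₂ | (y, w) ∈ F} with hPdef
      have hPclosed : IsClosed P := hFclosed.preimage (Continuous.prodMk_right y)
      have hPcpt : IsCompact P := hPclosed.isCompact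
      have hPnr : ∀ w ∈ P, w ∉ Set.range e := fun w hw hr => hy (lem2 y w hw hr)
      have hdich : ∃ s : Finset ℕ,
          (e xa ∈ V s ∧ ∃ w ∈ P, w ∉ V s) ∨ (e xa ∉ V s ∧ ∀ w ∈ P, w ∈ V s) := by
        by_contra hcon
        have hc1 : ∀ s : Finset ℕ, e xa ∈ V s → ∀ w ∈ P, w ∈ V s := by
          intro s hs w hw
          by_contra hwn
          exact hcon ⟨s, Or.inl ⟨hs, w, hw, hwn⟩⟩
        have hc2 : ∀ s : Finset ℕ, (∀ w ∈ P, w ∈ V s) → e xa ∈ V s := by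
          intro s hall
          by_contra hne
          exact hcon ⟨s, Or.inr ⟨hne, hall⟩⟩
        have hb : ∀ w ∈ P, ∃ n, e xa ∉ 𝒱 n ∧ w ∈ 𝒱 n := by
          intro w hw
          obtain ⟨n, hn⟩ := hsep (e xa) ⟨xa, rfl⟩ w (hPnr w hw)
          rcases hn with h1 | h1
          · exfalso
            have hVs : e xa ∈ V {n} := by simp [hVdef, h1.1]
            have := hc1 {n} hVs w hw
            simp [hVdef] at this
            exact h1.2 this
          · exact ⟨n, h1.1, h1.2⟩
        set W : ℕ → Set K₂ := fun n => if e xa ∈ 𝒱 n then ∅ else 𝒱 n with hWdef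
        have hWopen : ∀ n, IsOpen (W n) := by
          intro n
          by_cases h : e xa ∈ 𝒱 n <;> simp [hWdef, h, hVopen n]
        have hcover : P ⊆ ⋃ n, W n := by
          intro w hw
          obtain ⟨n, hn1, hn2⟩ := hb w hw
          exact Set.mem_iUnion.2 ⟨n, by simp [hWdef, hn1, hn2]⟩
        obtain ⟨t, ht⟩ := hPcpt.elim_finite_subcover W hWopen hcover
        set s : Finset ℕ := t.filter (fun n => e xa ∉ 𝒱 n) with hsdef
        have hPs : ∀ w ∈ P, w ∈ V s := by
          intro w hw
          rcases Set.mem_iUnion₂.1 (ht hw) with ⟨n, hnt, hnw⟩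
          by_cases hc : e xa ∈ 𝒱 n
          · simp [hWdef, hc] at hnw
          · have hns : n ∈ s := Finset.mem_filter.2 ⟨hnt, hc⟩
            have : w ∈ 𝒱 n := by simpa [hWdef, hc] using hnw
            exact Set.mem_biUnion hns this
        have hxs : e xa ∉ V s := by
          intro hmem
          rcases Set.mem_iUnion₂.1 hmem with ⟨n, hns, hnx⟩
          exact (Finset.mem_filter.1 hns).2 hnx
        exact hxs (hc2 s hPs)
      obtain ⟨s, hcase⟩ := hdich
      refine ⟨Encodable.encode (some s : Option (Finset ℕ)), ?_⟩
      simp only [Encodable.encodek, Option.elim]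
      rcases hcase with ⟨hxV, w, hwP, hwV⟩ | ⟨hxV, hall⟩
      · left
        constructor
        · intro w' hw'
          have := lem1 xa w' hw'
          rw [this]; exact hxV
        · intro hG
          exact hwV (hG w hwP)
      · right
        constructor
        · intro hG
          exact hxV (hG (e xa) (subset_closure ⟨xa, rfl⟩))
        · intro w hw
          exact hall w hw
    · -- y outside the closure of A
      refine ⟨Encodable.encode (none : Option (Finset ℕ)), ?_⟩
      simp only [Encodable.encodek, Option.elim]
      exact Or.inr ⟨fun hc => hc (subset_closure hx), hyc⟩

end Hard

/-- For every compact Hausdorff space `K` the family of subspaces of `K`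
having countable separation is a `{-1,1}^ω`-algebra containing all open subsets of `K`;
consequently it is a σ-algebra, contains all Borel subsets of `K`, and is closed under the
Suslin `A`-operation. -/
theorem csFamily_signAlgebra (K : Type u) [TopologicalSpace K] [CompactSpace K] [T2Space K] :
    IsSignAlgebra (csFamily K) ∧
    (∀ U : Set K, IsOpen U → U ∈ csFamily K) ∧
    (Set.univ ∈ csFamily K) ∧
    (∀ A ∈ csFamily K, Aᶜ ∈ csFamily K) ∧
    (∀ A : ℕ → Set K, (∀ n, A n ∈ csFamily K) → (⋃ n, A n) ∈ csFamily K) ∧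
    (∀ A : Set K, @MeasurableSet K (borel K) A → A ∈ csFamily K) ∧
    (∀ A : List ℕ → Set K, (∀ s, A s ∈ csFamily K) →
      (⋃ α : ℕ → ℕ, ⋂ n : ℕ, A (List.ofFn fun i : Fin n => α i)) ∈ csFamily K) := by
  have key : ∀ A : Set K, A ∈ csFamily K ↔ GoodFam A :=
    fun A => ⟨goodFam_of_cs, cs_of_goodFam⟩
  have hopen : ∀ U : Set K, IsOpen U → U ∈ csFamily K :=
    fun U hU => (key U).2 (goodFam_of_isOpen hU)
  have hcompl : ∀ A ∈ csFamily K, Aᶜ ∈ csFamily K :=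
    fun A hA => (key _).2 (goodFam_compl ((key A).1 hA))
  have hsign : IsSignAlgebra (csFamily K) := by
    intro A hA Ω
    refine (key _).2 (goodFam_combine A (fun n => (key _).1 (hA n)) _ ?_)
    intro x y hxy hxT
    simp only [Set.mem_iUnion] at hxT ⊢
    obtain ⟨f, hf, hmem⟩ := hxT
    refine ⟨f, hf, ?_⟩
    rw [Set.mem_iInter] at hmem ⊢
    intro n
    have h := hmem n
    cases hfn : f n
    · rw [hfn] at h
      simp only [SignedSet, if_neg Bool.false_ne_true] at h ⊢
      exact fun hyA => h ((hxy n).2 hyA)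
    · rw [hfn] at h
      simp only [SignedSet, if_pos rfl] at h ⊢
      exact (hxy n).1 h
  have hunion : ∀ A : ℕ → Set K, (∀ n, A n ∈ csFamily K) → (⋃ n, A n) ∈ csFamily K := by
    intro A hA
    refine (key _).2 (goodFam_combine A (fun n => (key _).1 (hA n)) _ ?_)
    intro x y hxy hxT
    rcases Set.mem_iUnion.1 hxT with ⟨n, hn⟩
    exact Set.mem_iUnion.2 ⟨n, (hxy n).1 hn⟩
  refine ⟨hsign, hopen, hopen _ isOpen_univ, hcompl, hunion, ?_, ?_⟩
  · -- Borel sets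
    intro A hA
    let m : MeasurableSpace K :=
      { MeasurableSet' := fun B => B ∈ csFamily K
        measurableSet_empty := hopen _ isOpen_empty
        measurableSet_compl := hcompl
        measurableSet_iUnion := hunion }
    have hle : borel K ≤ m := by
      apply MeasurableSpace.generateFrom_le
      intro t ht
      exact hopen t ht
    exact hle A hA
  · -- Suslin operation
    intro A hA
    refine (key _).2 (goodFam_combine A (fun s => (key _).1 (hA s)) _ ?_)
    intro x y hxy hxT
    rcases Set.mem_iUnion.1 hxT with ⟨α, hα⟩
    refine Set.mem_iUnion.2 ⟨α, ?_⟩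
    rw [Set.mem_iInter] at hα ⊢
    intro n
    exact (hxy _).1 (hα n)
end

section
/- Let f : X → Y be a continuous map between Tychonoff spaces. (1) If X has countable separation, then for every subspace Z ⊆ Y with countable separation the preimage f^{-1}(Z) has countable separation. (2) If Y has countable separation and f is a perfect map, then X has countable separation. -/
open Topology Set

universe u v

section Aux

open Filter

/-- Build the countable-separation data for `T` from an embedding of `T` into a compact
Hausdorff space, together with a countable open family that separates points of the range
from points of the closure of the range outside the range. -/
lemma build_countable_separation {T M : Type u} [TopologicalSpace T] [TopologicalSpace M]
    [CompactSpace M] [T2Space M] (g : T → M) (hg : Topology.IsEmbedding g)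
    (𝒲 : ℕ → Set M) (hW : ∀ n, IsOpen (𝒲 n))
    (hsep : ∀ t : T, ∀ k ∈ closure (Set.range g), k ∉ Set.range g →
      ∃ n, (g t ∈ 𝒲 n ∧ k ∉ 𝒲 n) ∨ (g t ∉ 𝒲 n ∧ k ∈ 𝒲 n)) :
    HasCountableSeparation T := by
  refine ⟨↥(closure (Set.range g)), inferInstance,
    isCompact_iff_compactSpace.1 isClosed_closure.isCompact, inferInstance,
    fun t => ⟨g t, subset_closure ⟨t, rfl⟩⟩, ?_, ?_, fun n => Subtype.val ⁻¹' 𝒲 n,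
    fun n => (hW n).preimage continuous_subtype_val, ?_⟩
  · exact Topology.IsEmbedding.of_comp (hg.continuous.codRestrict _) continuous_subtype_val hg
  · intro k
    rw [closure_subtype]
    have : Subtype.val '' Set.range (fun t : T => (⟨g t, subset_closure ⟨t, rfl⟩⟩ :
        ↥(closure (Set.range g)))) = Set.range g := by
      rw [← Set.range_comp]; rfl
    rw [this]
    exact k.2
  · rintro x ⟨t, rfl⟩ y hy
    have hy' : (y : M) ∉ Set.range g := by
      rintro ⟨t', ht'⟩
      exact hy ⟨t', Subtype.ext ht'⟩
    obtain ⟨n, h⟩ := hsep t y.1 y.2 hy'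
    exact ⟨n, h⟩

/-- Every Tychonoff space embeds in a compact Hausdorff space (the Tychonoff cube). -/
lemma exists_compact_embedding (X : Type u) [TopologicalSpace X] [T35Space X] :
    ∃ (B : Type u) (tB : TopologicalSpace B), @CompactSpace B tB ∧ @T2Space B tB ∧
      ∃ e : X → B, @Topology.IsEmbedding X B _ tB e := by
  classical
  let Q := {φ : X → unitInterval // Continuous φ}
  let e : X → (Q → unitInterval) := fun x q => q.1 x
  refine ⟨Q → unitInterval, inferInstance, inferInstance, inferInstance, e, ?_, ?_⟩
  · -- inducing
    rw [Topology.isInducing_iff_nhds]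
    intro x
    refine le_antisymm (tendsto_iff_comap.1 ((continuous_pi fun q => q.2).tendsto x)) ?_
    intro U hU
    obtain ⟨U', hU'sub, hU'open, hxU'⟩ := mem_nhds_iff.1 hU
    obtain ⟨φ, hφc, hφx, hφ1⟩ :=
      CompletelyRegularSpace.completely_regular x U'ᶜ hU'open.isClosed_compl (by simpa)
    refine mem_comap.2 ⟨(fun b => b ⟨φ, hφc⟩) ⁻¹' (Subtype.val ⁻¹' Set.Iio (1 : ℝ)), ?_, ?_⟩
    · refine IsOpen.mem_nhds ?_ ?_
      · exact ((isOpen_Iio).preimage continuous_subtype_val).preimage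
          (continuous_apply (⟨φ, hφc⟩ : Q))
      show ((φ x : unitInterval) : ℝ) < 1
      rw [hφx]; norm_num
    · intro y hy
      apply hU'sub
      by_contra hyU'
      have : φ y = 1 := hφ1 hyU'
      have hy' : ((φ y : unitInterval) : ℝ) < 1 := hy
      rw [this] at hy'
      norm_num at hy'
  · -- injective
    intro x y hxy
    by_contra hne
    obtain ⟨φ, hφc, hφ⟩ := separatesPoints_continuous_of_t35Space_Icc hne
    exact hφ (congrFun hxy ⟨φ, hφc⟩)

end Aux

/-- Let `f : X → Y` be a continuous map between Tychonoff spaces.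
(1) If `X` has countable separation, then for every subspace `Z ⊆ Y` with countable
    separation the preimage `f ⁻¹' Z` has countable separation.
(2) If `Y` has countable separation and `f` is perfect (closed with compact fibers), then `X`
    has countable separation. -/
theorem hasCountableSeparation_preimage_and_perfect {X Y : Type u}
    [TopologicalSpace X] [TopologicalSpace Y] [T35Space X] [T35Space Y]
    (f : X → Y) (hf : Continuous f) :
    (HasCountableSeparation X → ∀ Z : Set Y, HasCountableSeparation ↥Z →
      HasCountableSeparation ↥(f ⁻¹' Z)) ∧
    ((HasCountableSeparation Y ∧ IsClosedMap f ∧ ∀ y : Y, IsCompact (f ⁻¹' {y})) →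
      HasCountableSeparation X) := by
  constructor
  · -- Part (1)
    rintro ⟨B, tB, hBc, hBt2, eX, hEX, -, 𝒰, h𝒰, hsepU⟩ Z ⟨C, tC, hCc, hCt2, eZ, hEZ, -, 𝒱, h𝒱,
      hsepV⟩
    let T := ↥(f ⁻¹' Z)
    let g : T → B × C := fun t => (eX t.1, eZ ⟨f t.1, t.2⟩)
    have hgc : Continuous g :=
      (hEX.continuous.comp continuous_subtype_val).prodMk
        (hEZ.continuous.comp ((hf.comp continuous_subtype_val).subtype_mk _))
    have hgemb : Topology.IsEmbedding g :=
      Topology.IsEmbedding.of_comp hgc continuous_fst (hEX.comp Topology.IsEmbedding.subtypeVal)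
    refine build_countable_separation g hgemb
      (fun n => if Even n then Prod.fst ⁻¹' 𝒰 (n / 2) else Prod.snd ⁻¹' 𝒱 (n / 2)) ?_ ?_
    · intro n
      by_cases h : Even n <;> simp only [h, if_true, if_false] <;>
        [exact (h𝒰 _).preimage continuous_fst; exact (h𝒱 _).preimage continuous_snd]
    · rintro t ⟨a, c⟩ hk hknr
      by_cases ha : a ∈ Set.range eX
      · obtain ⟨x, rfl⟩ := ha
        by_cases hc : c ∈ Set.range eZ
        · exfalso
          obtain ⟨z, rfl⟩ := hc
          set F := Filter.comap g (nhds (eX x, eZ z)) with hF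
          have hne : F.NeBot := by
            rw [hF, Filter.comap_neBot_iff]
            intro s hs
            obtain ⟨m, hms, t', ht'⟩ := mem_closure_iff_nhds.1 hk s hs
            exact ⟨t', by rw [ht']; exact hms⟩
          have h1 : Filter.Tendsto g F (nhds (eX x, eZ z)) := Filter.tendsto_comap
          have h2 : Filter.Tendsto (fun t : T => eX t.1) F (nhds (eX x)) :=
            (continuous_fst.tendsto _).comp h1
          have h3 : Filter.Tendsto (fun t : T => (t : X)) F (nhds x) :=
            hEX.tendsto_nhds_iff.2 h2
          have h4 : Filter.Tendsto (fun t : T => f t) F (nhds (f x)) := (hf.tendsto x).comp h3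
          have h5 : Filter.Tendsto (fun t : T => eZ ⟨f t.1, t.2⟩) F (nhds (eZ z)) :=
            (continuous_snd.tendsto _).comp h1
          have h6 : Filter.Tendsto (fun t : T => (⟨f t.1, t.2⟩ : Z)) F (nhds z) :=
            hEZ.tendsto_nhds_iff.2 h5
          have h7 : Filter.Tendsto (fun t : T => f t) F (nhds (z : Y)) :=
            (continuous_subtype_val.tendsto z).comp h6
          have hxz : f x = (z : Y) := tendsto_nhds_unique h4 h7
          refine hknr ⟨⟨x, show f x ∈ Z from hxz ▸ z.2⟩, ?_⟩
          exact Prod.ext rfl (congrArg eZ (Subtype.ext hxz))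
        · obtain ⟨n, hn⟩ := hsepV (eZ ⟨f t.1, t.2⟩) ⟨_, rfl⟩ c hc
          refine ⟨2 * n + 1, ?_⟩
          have he : ¬ Even (2 * n + 1) := by simp [Nat.even_add_one]
          have hd : (2 * n + 1) / 2 = n := by omega
          simpa only [he, if_false, hd, Set.mem_preimage] using hn
      · obtain ⟨n, hn⟩ := hsepU (eX t.1) ⟨_, rfl⟩ a ha
        refine ⟨2 * n, ?_⟩
        have he : Even (2 * n) := even_two_mul n
        have hd : 2 * n / 2 = n := by omega
        simpa only [he, if_true, hd, Set.mem_preimage] using hn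
  · -- Part (2)
    rintro ⟨⟨C, tC, hCc, hCt2, eY, hEY, -, 𝒱, h𝒱, hsepV⟩, hclosed, hcomp⟩
    obtain ⟨B, tB, hBc, hBt2, eX, hEX⟩ := exists_compact_embedding X
    let g : X → B × C := fun x => (eX x, eY (f x))
    have hgc : Continuous g := hEX.continuous.prodMk (hEY.continuous.comp hf)
    have hgemb : Topology.IsEmbedding g :=
      Topology.IsEmbedding.of_comp hgc continuous_fst hEX
    refine build_countable_separation g hgemb (fun n => Prod.snd ⁻¹' 𝒱 n)
      (fun n => (h𝒱 n).preimage continuous_snd) ?_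
    rintro t ⟨a, c⟩ hk hknr
    have hc : c ∉ Set.range eY := by
      rintro ⟨y, rfl⟩
      have ha : a ∈ eX '' (f ⁻¹' {y}) := by
        by_contra ha
        obtain ⟨U, W, hUo, hWo, hCU, haW, hdUW⟩ :=
          ((hcomp y).image hEX.continuous).separation_of_notMem ha
        set A := (eX ⁻¹' U)ᶜ with hA_def
        have hA : IsClosed A := (hUo.preimage hEX.continuous).isClosed_compl
        have hfA : IsClosed (f '' A) := hclosed A hA
        have hyA : y ∉ f '' A := by
          rintro ⟨x', hx'A, rfl⟩
          exact hx'A (hCU ⟨x', rfl, rfl⟩)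
        have hVopen : IsOpen ((f '' A)ᶜ) := hfA.isOpen_compl
        rw [hEY.isInducing.eq_induced, isOpen_induced_iff] at hVopen
        obtain ⟨V', hV'o, hV'pre⟩ := hVopen
        have hyV' : eY y ∈ V' := by
          have : y ∈ eY ⁻¹' V' := by rw [hV'pre]; exact hyA
          exact this
        have hmem : (a, eY y) ∈ W ×ˢ V' := ⟨haW, hyV'⟩
        obtain ⟨m, hmWV, x', rfl⟩ :=
          mem_closure_iff_nhds.1 hk (W ×ˢ V') ((hWo.prod hV'o).mem_nhds hmem)
        have h1 : eX x' ∈ W := hmWV.1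
        have h2 : f x' ∈ (f '' A)ᶜ := by
          rw [← hV'pre]; exact hmWV.2
        have h3 : eX x' ∈ U := not_not.1 fun h => h2 ⟨x', h, rfl⟩
        exact Set.disjoint_left.1 hdUW h3 h1
      obtain ⟨x', hx', rfl⟩ := ha
      have hx'' : f x' = y := hx'
      refine hknr ⟨x', ?_⟩
      show (eX x', eY (f x')) = (eX x', eY y)
      rw [hx'']
    obtain ⟨n, hn⟩ := hsepV (eY (f t)) ⟨_, rfl⟩ c hc
    exact ⟨n, hn⟩
end

section
/- If a Tychonoff space (X, τ) satisfies |X| ≥ |τ^ω| > 𝔠 (where |τ^ω| is the cardinality of the set of all countable sequences of open subsets of X and 𝔠 is the cardinality of the continuum), then X contains a subspace Y without countable separation. -/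
open Topology Set

universe u v

open Filter Cardinal

open unitInterval in
theorem isInducing_stoneCechUnit' {X : Type*} [TopologicalSpace X] [CompletelyRegularSpace X] :
    Topology.IsInducing (stoneCechUnit : X → StoneCech X) := by
  rw [isInducing_iff_nhds]
  intro x
  refine le_antisymm (continuous_stoneCechUnit.tendsto x).le_comap ?_
  intro U hU
  rw [Filter.mem_comap]
  rcases (nhds_basis_opens x).mem_iff.mp hU with ⟨V, ⟨hxV, hVopen⟩, hVU⟩
  obtain ⟨f, fc, fx, fK⟩ :=
    CompletelyRegularSpace.completely_regular x Vᶜ hVopen.isClosed_compl (by simpa)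
  refine ⟨(stoneCechExtend fc) ⁻¹' {y : I | (y : ℝ) < 1}, ?_, ?_⟩
  · have : IsOpen ((stoneCechExtend fc) ⁻¹' {y : I | (y : ℝ) < 1}) := by
      exact (isOpen_Iio.preimage continuous_subtype_val).preimage (continuous_stoneCechExtend fc)
    refine this.mem_nhds ?_
    have : stoneCechExtend fc (stoneCechUnit x) = f x := congrFun (stoneCechExtend_extends fc) x
    simp [this, fx]
  · intro z hz
    simp only [mem_preimage] at hz
    have hz' : stoneCechExtend fc (stoneCechUnit z) = f z := congrFun (stoneCechExtend_extends fc) z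
    rw [hz'] at hz
    by_contra hzU
    have hzV : z ∈ Vᶜ := fun h => hzU (hVU h)
    have : f z = 1 := fK hzV
    rw [this] at hz
    simp at hz

theorem fiber_singleton {Z L C : Type*} [TopologicalSpace Z] [TopologicalSpace L]
    [TopologicalSpace C] [T2Space L] [T2Space C]
    {d : Z → L} (hd : Continuous d) (hdd : DenseRange d)
    {p : L → C} (hp : Continuous p) {f : Z → C} (hf : Topology.IsInducing f)
    (hpd : ∀ z, p (d z) = f z) :
    ∀ (b : L) (z : Z), p b = f z → b = d z := by
  intro b z hb
  have hH : (𝓝 b ⊓ 𝓟 (range d)).NeBot := mem_closure_iff_clusterPt.mp (hdd b)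
  set G : Filter Z := Filter.comap d (𝓝 b) with hG
  have hmapG : Filter.map d G = 𝓝 b ⊓ 𝓟 (range d) := Filter.map_comap _ _
  have hGne : G.NeBot := by
    rw [← Filter.map_neBot_iff d, hmapG]; exact hH
  have h1 : Filter.map f G ≤ 𝓝 (f z) := by
    have : Filter.map f G = Filter.map p (Filter.map d G) := by
      rw [Filter.map_map]; congr 1; ext w; exact (hpd w).symm
    rw [this, hmapG]
    calc Filter.map p (𝓝 b ⊓ 𝓟 (range d)) ≤ Filter.map p (𝓝 b) :=
          Filter.map_mono inf_le_left
      _ ≤ 𝓝 (p b) := (hp.tendsto b)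
      _ = 𝓝 (f z) := by rw [hb]
  have h2 : G ≤ 𝓝 z := by
    calc G ≤ Filter.comap f (Filter.map f G) := Filter.le_comap_map
      _ ≤ Filter.comap f (𝓝 (f z)) := Filter.comap_mono h1
      _ = 𝓝 z := (hf.nhds_eq_comap z).symm
  have h3 : Filter.map d G ≤ 𝓝 (d z) := le_trans (Filter.map_mono h2) (hd.tendsto z)
  have h4 : Filter.map d G ≤ 𝓝 b := hmapG ▸ inf_le_left
  have : (𝓝 b ⊓ 𝓝 (d z)).NeBot := Filter.neBot_of_le (f := Filter.map d G) (le_inf h4 h3)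
  exact eq_of_nhds_neBot this

/-- Pull a separating family back along `p₁ : L → K`. -/

theorem pull_sep {Z L K : Type*} [TopologicalSpace Z] [TopologicalSpace L]
    [TopologicalSpace K] [T2Space L] [T2Space K]
    {d : Z → L} (hd : Continuous d) (hdd : DenseRange d)
    {p : L → K} (hp : Continuous p) {e : Z → K} (he : Topology.IsInducing e)
    (hpd : ∀ z, p (d z) = e z)
    (𝒰 : ℕ → Set K) (hUo : ∀ n, IsOpen (𝒰 n)) (hUs : SeparatesFrom 𝒰 (range e)) :
    ∃ 𝒲 : ℕ → Set L, (∀ n, IsOpen (𝒲 n)) ∧ SeparatesFrom 𝒲 (range d) := by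
  refine ⟨fun n => p ⁻¹' 𝒰 n, fun n => (hUo n).preimage hp, ?_⟩
  rintro x ⟨z, rfl⟩ y hy
  have hyK : p y ∈ (range e)ᶜ := by
    rintro ⟨z', hz'⟩
    exact hy ⟨z', (fiber_singleton hd hdd hp he hpd y z' hz'.symm).symm⟩
  obtain ⟨n, hn⟩ := hUs (e z) ⟨z, rfl⟩ (p y) hyK
  refine ⟨n, ?_⟩
  simpa [mem_preimage, hpd z] using hn

/-- Push a separating family forward along `p : L → C`. -/

theorem push_sep {Z L C : Type*} [TopologicalSpace Z] [TopologicalSpace L]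
    [TopologicalSpace C] [CompactSpace L] [T2Space L] [T2Space C]
    {d : Z → L} (hd : Continuous d) (hdd : DenseRange d)
    {p : L → C} (hp : Continuous p)
    {g : Z → C} (hg : Topology.IsInducing g) (hgd : DenseRange g)
    (hpd : ∀ z, p (d z) = g z)
    (𝒲 : ℕ → Set L) (hWo : ∀ n, IsOpen (𝒲 n)) (hWs : SeparatesFrom 𝒲 (range d)) :
    ∃ 𝒱 : ℕ → Set C, (∀ n, IsOpen (𝒱 n)) ∧ SeparatesFrom 𝒱 (range g) := by
  classical
  -- p is surjective
  have psurj : Function.Surjective p := by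
    have h1 : IsClosed (range p) := (isCompact_range hp).isClosed
    have h2 : range g ⊆ range p := by
      rintro _ ⟨z, rfl⟩; exact ⟨d z, hpd z⟩
    have h3 : (univ : Set C) ⊆ range p := by
      rw [← hgd.closure_range]
      calc closure (range g) ⊆ closure (range p) := closure_mono h2
        _ = range p := h1.closure_eq
    exact fun c => h3 (mem_univ c)
  -- close the family under finite unions
  set F : ℕ → Finset ℕ := fun n => (Denumerable.eqv (Finset ℕ)).symm n with hF
  set W : ℕ → Set L := fun n => ⋃ m ∈ F n, 𝒲 m with hW
  have hWo' : ∀ n, IsOpen (W n) := fun n => isOpen_biUnion fun m _ => hWo m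
  have hsingle : ∀ n₀ : ℕ, ∃ k, W k = 𝒲 n₀ := by
    intro n₀
    refine ⟨Denumerable.eqv (Finset ℕ) ({n₀} : Finset ℕ), ?_⟩
    simp [hW, hF]
  have hunion : ∀ k l : ℕ, ∃ m, W m = W k ∪ W l := by
    intro k l
    refine ⟨Denumerable.eqv (Finset ℕ) (F k ∪ F l), ?_⟩
    simp only [hW, hF, Equiv.symm_apply_apply]
    exact Finset.set_biUnion_union _ _ _
  have hWs' : SeparatesFrom W (range d) := by
    intro x hx y hy
    obtain ⟨n, hn⟩ := hWs x hx y hy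
    obtain ⟨k, hk⟩ := hsingle n
    exact ⟨k, by rwa [hk]⟩
  -- the pushed family
  set V : ℕ → Set C := fun n => (p '' (W n)ᶜ)ᶜ with hV
  have hVo : ∀ n, IsOpen (V n) := by
    intro n
    rw [hV]
    exact (((hWo' n).isClosed_compl.isCompact.image hp).isClosed).isOpen_compl
  have hmem : ∀ (z : Z) (n : ℕ), g z ∈ V n ↔ d z ∈ W n := by
    intro z n
    constructor
    · intro h
      by_contra hdz
      exact h ⟨d z, hdz, hpd z⟩
    · intro hdz
      rintro ⟨b, hb, hpb⟩
      exact hb ((fiber_singleton hd hdd hp hg hpd b z hpb) ▸ hdz)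
  refine ⟨V, hVo, ?_⟩
  rintro x ⟨z, rfl⟩ w hw
  by_contra hcon
  push_neg at hcon
  have hiff : ∀ n, (g z ∈ V n ↔ w ∈ V n) := by
    intro n
    have := hcon n
    tauto
  set s : Set ℕ := {n | d z ∈ W n} with hs
  have hfib1 : ∀ n ∈ s, p ⁻¹' {w} ⊆ W n := by
    intro n hn b hb
    by_contra hbW
    have hwV : w ∈ V n := (hiff n).mp ((hmem z n).mpr hn)
    exact hwV ⟨b, hbW, hb⟩
  have hfib2 : ∀ n ∉ s, ∃ b, p b = w ∧ b ∉ W n := by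
    intro n hn
    have hgz : g z ∉ V n := fun h => hn ((hmem z n).mp h)
    have hwV : w ∉ V n := fun h => hgz ((hiff n).mpr h)
    have : w ∈ p '' (W n)ᶜ := not_not.mp hwV
    obtain ⟨b, hb, hpb⟩ := this
    exact ⟨b, hpb, hb⟩
  -- find a point b₀ in the fiber of w with the same W-type as d z
  have hb₀ : ∃ b₀, p b₀ = w ∧ (∀ n ∈ s, b₀ ∈ W n) ∧ (∀ n ∉ s, b₀ ∉ W n) := by
    by_cases hns : ∃ n, n ∉ s
    · have hne : Nonempty {n : ℕ // n ∉ s} := ⟨⟨hns.choose, hns.choose_spec⟩⟩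
      set B : {n : ℕ // n ∉ s} → Set L := fun n => p ⁻¹' {w} ∩ (W n.1)ᶜ with hB
      have hdir : Directed (· ⊇ ·) B := by
        rintro ⟨a, ha⟩ ⟨b, hb⟩
        obtain ⟨m, hm⟩ := hunion a b
        have hmns : m ∉ s := by
          intro hmem'
          rw [hs] at hmem' ha hb
          simp only [mem_setOf_eq, hm, mem_union] at hmem'
          tauto
        refine ⟨⟨m, hmns⟩, ?_, ?_⟩ <;>
          · rintro x ⟨hx1, hx2⟩
            refine ⟨hx1, fun hx3 => hx2 ?_⟩
            rw [hm]; simp [hx3]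
      have hnon : ∀ n, (B n).Nonempty := by
        rintro ⟨n, hn⟩
        obtain ⟨b, hb1, hb2⟩ := hfib2 n hn
        exact ⟨b, hb1, hb2⟩
      have hcl : ∀ n, IsClosed (B n) := fun n =>
        (isClosed_singleton.preimage hp).inter (hWo' n.1).isClosed_compl
      have hcp : ∀ n, IsCompact (B n) := fun n => (hcl n).isCompact
      obtain ⟨b₀, hb₀⟩ :=
        IsCompact.nonempty_iInter_of_directed_nonempty_isCompact_isClosed B hdir hnon hcp hcl
      simp only [mem_iInter, hB, mem_inter_iff, mem_preimage, mem_singleton_iff] at hb₀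
      have hfw : p b₀ = w := (hb₀ ⟨hns.choose, hns.choose_spec⟩).1
      refine ⟨b₀, hfw, fun n hn => hfib1 n hn hfw, fun n hn => (hb₀ ⟨n, hn⟩).2⟩
    · push_neg at hns
      obtain ⟨b₀, hb₀⟩ := psurj w
      exact ⟨b₀, hb₀, fun n _ => hfib1 n (hns n) hb₀, fun n hn => absurd (hns n) hn⟩
  obtain ⟨b₀, hpb₀, hin, hout⟩ := hb₀
  have hb₀d : b₀ ∈ (range d)ᶜ := by
    rintro ⟨z', rfl⟩
    exact hw ⟨z', by rw [← hpd z', hpb₀]⟩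
  obtain ⟨n, hn⟩ := hWs' (d z) ⟨z, rfl⟩ b₀ hb₀d
  by_cases hns : n ∈ s
  · rcases hn with ⟨_, h2⟩ | ⟨h1, _⟩
    · exact h2 (hin n hns)
    · exact h1 hns
  · rcases hn with ⟨h1, _⟩ | ⟨_, h2⟩
    · exact hns h1
    · exact (hout n hns) h2

theorem sep_necessary {X : Type u} [TopologicalSpace X] [T35Space X] (Y : Set X)
    (h : HasCountableSeparation ↥Y) :
    ∃ σ : ℕ → {U : Set X // IsOpen U}, ∀ x ∈ closure Y \ Y, ∀ y ∈ Y, ∃ n,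
      (x ∈ (σ n).1 ∧ y ∉ (σ n).1) ∨ (x ∉ (σ n).1 ∧ y ∈ (σ n).1) := by
  classical
  obtain ⟨K, tK, cK, t2K, e, he, hde, 𝒰, hUo, hUs⟩ := h
  have hu_ind : Topology.IsInducing (stoneCechUnit : X → StoneCech X) :=
    isInducing_stoneCechUnit'
  have hu_inj : Function.Injective (stoneCechUnit : X → StoneCech X) :=
    injective_stoneCechUnit_of_t35Space
  set u : X → StoneCech X := stoneCechUnit with hu
  set S : Set (StoneCech X) := closure (u '' Y) with hS
  haveI : CompactSpace ↥S := isCompact_iff_compactSpace.mp isClosed_closure.isCompact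
  set g : ↥Y → ↥S := fun z => ⟨u z.1, subset_closure ⟨z.1, z.2, rfl⟩⟩ with hg
  have hgval : ∀ z : ↥Y, (g z : StoneCech X) = u z.1 := fun z => rfl
  have hgcont : Continuous g :=
    Continuous.codRestrict (continuous_stoneCechUnit.comp continuous_subtype_val) _
  have hg_ind : Topology.IsInducing g := by
    have h1 : Topology.IsInducing ((Subtype.val : ↥S → StoneCech X) ∘ g) := by
      have : (Subtype.val : ↥S → StoneCech X) ∘ g = u ∘ (Subtype.val : ↥Y → X) := rfl
      rw [this]
      exact hu_ind.comp Topology.IsInducing.subtypeVal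
    exact Topology.IsInducing.of_comp hgcont continuous_subtype_val h1
  have hrange_g : (Subtype.val : ↥S → StoneCech X) '' (range g) = u '' Y := by
    ext w
    constructor
    · rintro ⟨c, ⟨z, rfl⟩, rfl⟩; exact ⟨z.1, z.2, rfl⟩
    · rintro ⟨x, hx, rfl⟩; exact ⟨g ⟨x, hx⟩, ⟨⟨x, hx⟩, rfl⟩, rfl⟩
  have hgd : DenseRange g := by
    intro c
    rw [closure_subtype, hrange_g]
    exact c.2
  -- the joint compactification
  set dd : ↥Y → K × ↥S := fun z => (e z, g z) with hdd
  set T : Set (K × ↥S) := closure (range dd) with hT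
  haveI : CompactSpace ↥T := isCompact_iff_compactSpace.mp isClosed_closure.isCompact
  set d : ↥Y → ↥T := fun z => ⟨dd z, subset_closure ⟨z, rfl⟩⟩ with hd
  have hdcont : Continuous d :=
    Continuous.codRestrict (Continuous.prodMk he.continuous hgcont) _
  have hrange_d : (Subtype.val : ↥T → K × ↥S) '' (range d) = range dd := by
    ext w
    constructor
    · rintro ⟨c, ⟨z, rfl⟩, rfl⟩; exact ⟨z, rfl⟩
    · rintro ⟨z, rfl⟩; exact ⟨d z, ⟨z, rfl⟩, rfl⟩
  have hddense : DenseRange d := by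
    intro b
    rw [closure_subtype, hrange_d]
    exact b.2
  set p₁ : ↥T → K := fun b => b.1.1 with hp₁
  have hp₁cont : Continuous p₁ := continuous_fst.comp continuous_subtype_val
  set p₂ : ↥T → ↥S := fun b => b.1.2 with hp₂
  have hp₂cont : Continuous p₂ := continuous_snd.comp continuous_subtype_val
  obtain ⟨𝒲, hWo, hWs⟩ :=
    pull_sep hdcont hddense hp₁cont he.toIsInducing (fun z => rfl) 𝒰 hUo hUs
  obtain ⟨𝒱, hVo, hVs⟩ :=
    push_sep hdcont hddense hp₂cont hg_ind hgd (fun z => rfl) 𝒲 hWo hWs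
  -- read off the open sets as traces of open sets of X
  have hVrep : ∀ n, ∃ V' : Set (StoneCech X), IsOpen V' ∧
      (Subtype.val : ↥S → StoneCech X) ⁻¹' V' = 𝒱 n := by
    intro n
    exact isOpen_induced_iff.mp (hVo n)
  choose V' hV'o hV'eq using hVrep
  refine ⟨fun n => ⟨u ⁻¹' V' n, (hV'o n).preimage continuous_stoneCechUnit⟩, ?_⟩
  rintro x ⟨hx1, hx2⟩ y hy
  have hux : u x ∈ S := by
    rw [hS]
    exact image_closure_subset_closure_image continuous_stoneCechUnit ⟨x, hx1, rfl⟩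
  set xh : ↥S := ⟨u x, hux⟩ with hxh
  have hxhr : xh ∈ (range g)ᶜ := by
    rintro ⟨z, hz⟩
    apply hx2
    have : u z.1 = u x := congrArg Subtype.val hz
    have : z.1 = x := hu_inj this
    rw [← this]; exact z.2
  obtain ⟨n, hn⟩ := hVs (g ⟨y, hy⟩) ⟨⟨y, hy⟩, rfl⟩ xh hxhr
  have hmy : g ⟨y, hy⟩ ∈ 𝒱 n ↔ u y ∈ V' n := by
    rw [← hV'eq n]; exact Iff.rfl
  have hmx : xh ∈ 𝒱 n ↔ u x ∈ V' n := by
    rw [← hV'eq n]; exact Iff.rfl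
  refine ⟨n, ?_⟩
  rcases hn with ⟨h1, h2⟩ | ⟨h1, h2⟩
  · exact Or.inr ⟨fun hc => h2 (hmx.mpr hc), hmy.mp h1⟩
  · exact Or.inl ⟨hmx.mp h2, fun hc => h1 (hmy.mpr hc)⟩

theorem exists_big_boundary {X : Type u} [TopologicalSpace X]
    (h1 : #(ℕ → {U : Set X // IsOpen U}) ≤ #X)
    (hκinf : ℵ₀ ≤ #(ℕ → {U : Set X // IsOpen U})) :
    ∃ B : Set X, #(ℕ → {U : Set X // IsOpen U}) ≤ #↥(closure B \ B) := by
  classical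
  by_contra hcon
  push_neg at hcon
  set T := ℕ → {U : Set X // IsOpen U} with hT
  set κ := #T with hκ
  -- get an injection of T × T into X
  have hTT : #(T × T) ≤ #X := by
    have : #(T × T) = κ * κ := by simp [Cardinal.mk_prod, hκ]
    rw [this, Cardinal.mul_eq_self hκinf]
    exact h1
  obtain ⟨f⟩ := (Cardinal.le_def _ _).mp hTT
  set A : T → Set X := fun t => range (fun t' => f (t, t')) with hA
  have hAcard : ∀ t, #↥(A t) = κ := by
    intro t
    rw [hA]
    exact mk_range_eq _ (fun a b hab => by
      have := f.injective hab
      exact (Prod.mk.injEq _ _ _ _).mp this |>.2)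
  have hAdisj : ∀ t t' : T, t ≠ t' → Disjoint (A t) (A t') := by
    intro t t' htt
    rw [Set.disjoint_left]
    rintro a ⟨c, rfl⟩ ⟨c', hc'⟩
    exact htt ((Prod.mk.injEq _ _ _ _).mp (f.injective hc')).1.symm
  -- pick a point of each A t interior to A t
  have hpick : ∀ t : T, ∃ x, x ∈ A t ∧ x ∉ closure ((A t)ᶜ) := by
    intro t
    by_contra hno
    push_neg at hno
    have hsub : A t ⊆ closure ((A t)ᶜ) \ (A t)ᶜ := by
      intro a ha
      exact ⟨hno a ha, fun hmem => hmem ha⟩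
    have : κ ≤ #↥(closure ((A t)ᶜ) \ (A t)ᶜ) := by
      calc κ = #↥(A t) := (hAcard t).symm
        _ ≤ _ := Cardinal.mk_le_mk_of_subset hsub
    exact absurd this (not_le.mpr (hcon _))
  choose x hxA hxC using hpick
  set U : T → Set X := fun t => (closure ((A t)ᶜ))ᶜ with hU
  have hUopen : ∀ t, IsOpen (U t) := fun t => isClosed_closure.isOpen_compl
  have hUsub : ∀ t, U t ⊆ A t := by
    intro t z hz
    by_contra hzA
    exact hz (subset_closure hzA)
  have hxU : ∀ t, x t ∈ U t := hxC
  -- the injection of Set T into the open sets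
  set Φ : Set T → {U : Set X // IsOpen U} :=
    fun s => ⟨⋃ t ∈ s, U t, isOpen_biUnion (fun t _ => hUopen t)⟩ with hΦ
  have hΦinj : Function.Injective Φ := by
    intro s s' hss
    have hval : (⋃ t ∈ s, U t) = ⋃ t ∈ s', U t := congrArg Subtype.val hss
    ext t
    constructor
    · intro hts
      have : x t ∈ ⋃ t' ∈ s', U t' := by
        rw [← hval]
        exact mem_biUnion hts (hxU t)
      obtain ⟨t', ht's, hxt'⟩ := mem_iUnion₂.mp this
      have : t = t' := by
        by_contra hne
        exact (Set.disjoint_left.mp (hAdisj t t' hne)) (hxA t) (hUsub t' hxt')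
      exact this ▸ ht's
    · intro hts
      have : x t ∈ ⋃ t' ∈ s, U t' := by
        rw [hval]
        exact mem_biUnion hts (hxU t)
      obtain ⟨t', ht's, hxt'⟩ := mem_iUnion₂.mp this
      have : t = t' := by
        by_contra hne
        exact (Set.disjoint_left.mp (hAdisj t t' hne)) (hxA t) (hUsub t' hxt')
      exact this ▸ ht's
  have h2κ : (2 : Cardinal) ^ κ ≤ κ := by
    calc (2 : Cardinal) ^ κ = #(Set T) := (Cardinal.mk_set).symm
      _ ≤ #{U : Set X // IsOpen U} := Cardinal.mk_le_of_injective hΦinj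
      _ ≤ κ := Cardinal.mk_le_of_injective (f := fun U _ => U)
          (fun a b hab => congrFun hab 0)
  exact absurd h2κ (not_le.mpr (Cardinal.cantor κ))

theorem exists_pair_aux {X : Type u} [TopologicalSpace X]
    (h2 : Cardinal.continuum.{u} < #(ℕ → {U : Set X // IsOpen U}))
    (E : Set X) (hE : #(ℕ → {U : Set X // IsOpen U}) ≤ #↥E)
    (σ : ℕ → {U : Set X // IsOpen U}) (P : Set X)
    (hP : #↥P < #(ℕ → {U : Set X // IsOpen U})) :
    ∃ a b : X, (a ∈ E ∧ a ∉ P) ∧ (b ∈ E ∧ b ∉ P) ∧ a ≠ b ∧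
      ∀ n, (a ∈ (σ n).1 ↔ b ∈ (σ n).1) := by
  classical
  set κ := #(ℕ → {U : Set X // IsOpen U}) with hκ
  have hκinf : ℵ₀ ≤ κ := aleph0_le_continuum.trans h2.le
  have hE' : κ ≤ #↥(E \ P) := by
    by_contra hlt
    push_neg at hlt
    have hsub : E ⊆ (E \ P) ∪ P := by
      intro z hz
      by_cases hzP : z ∈ P
      · exact Or.inr hzP
      · exact Or.inl ⟨hz, hzP⟩
    have : #↥E ≤ #↥(E \ P) + #↥P :=
      le_trans (Cardinal.mk_le_mk_of_subset hsub) (Cardinal.mk_union_le _ _)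
    exact absurd (hE.trans this) (not_le.mpr (Cardinal.add_lt_of_lt hκinf hlt hP))
  set t : ↥(E \ P) → Set (ULift.{u} ℕ) := fun z => {n | (z : X) ∈ (σ n.down).1} with ht
  have htni : ¬ Function.Injective t := by
    intro hinj
    have h1 : #↥(E \ P) ≤ #(Set (ULift.{u} ℕ)) := Cardinal.mk_le_of_injective hinj
    have h2' : #(Set (ULift.{u} ℕ)) = Cardinal.continuum.{u} := by
      rw [Cardinal.mk_set, Cardinal.mk_uLift, Cardinal.mk_nat, Cardinal.lift_aleph0,
        Cardinal.two_power_aleph0]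
    rw [h2'] at h1
    exact absurd (hE'.trans h1) (not_le.mpr h2)
  rw [Function.not_injective_iff] at htni
  obtain ⟨z, w, hzw, hne⟩ := htni
  refine ⟨z, w, ⟨z.2.1, z.2.2⟩, ⟨w.2.1, w.2.2⟩, ?_, ?_⟩
  · intro hval
    exact hne (Subtype.ext hval)
  · intro n
    have : (ULift.up n ∈ t z) ↔ (ULift.up n ∈ t w) := by rw [hzw]
    simpa [ht] using this


/-- If a Tychonoff space `X` with topology `τ` satisfies
`|X| ≥ |τ^ω| > 𝔠`, then `X` contains a subspace without countable separation. -/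
theorem exists_subspace_without_countableSeparation (X : Type u) [TopologicalSpace X]
    [T35Space X]
    (h1 : Cardinal.mk (ℕ → {U : Set X // IsOpen U}) ≤ Cardinal.mk X)
    (h2 : Cardinal.continuum.{u} < Cardinal.mk (ℕ → {U : Set X // IsOpen U})) :
    ∃ Y : Set X, ¬ HasCountableSeparation ↥Y := by
  classical
  set κ := #(ℕ → {U : Set X // IsOpen U}) with hκ
  have hκinf : ℵ₀ ≤ κ := aleph0_le_continuum.trans h2.le
  obtain ⟨B, hB⟩ := exists_big_boundary h1 hκinf
  set E := closure B \ B with hE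
  set O := κ.ord.ToType with hO
  have hOmk : #O = κ := Cardinal.mk_ord_toType κ
  obtain ⟨eqv⟩ := Cardinal.eq.mp hOmk
  -- the transfinite recursion producing the pairs
  have wf : WellFounded ((· < ·) : O → O → Prop) := wellFounded_lt
  set prev : (i : O) → ({j : O // j < i} → X × X) → Set X :=
    fun i up => {z | ∃ j : {j : O // j < i}, z = (up j).1 ∨ z = (up j).2} with hprev
  have hprevcard : ∀ (i : O) (up : {j : O // j < i} → X × X), #↥(prev i up) < κ := by
    intro i up
    have hsub : prev i up ⊆
        range (Sum.elim (fun j : {j : O // j < i} => (up j).1)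
          (fun j : {j : O // j < i} => (up j).2)) := by
      rintro z ⟨j, hj | hj⟩
      · exact ⟨Sum.inl j, hj.symm⟩
      · exact ⟨Sum.inr j, hj.symm⟩
    have h1' : #↥(prev i up) ≤ #({j : O // j < i} ⊕ {j : O // j < i}) :=
      le_trans (Cardinal.mk_le_mk_of_subset hsub) Cardinal.mk_range_le
    have hIio : #{j : O // j < i} < κ := Cardinal.mk_Iio_ord_toType i
    have h2' : #({j : O // j < i} ⊕ {j : O // j < i}) < κ := by
      have : #({j : O // j < i} ⊕ {j : O // j < i}) = #{j : O // j < i} + #{j : O // j < i} := by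
        simp [Cardinal.mk_sum]
      rw [this]
      exact Cardinal.add_lt_of_lt hκinf hIio hIio
    exact lt_of_le_of_lt h1' h2'
  set good : (i : O) → X × X → Set X → Prop :=
    fun i p P => (p.1 ∈ E ∧ p.1 ∉ P) ∧ (p.2 ∈ E ∧ p.2 ∉ P) ∧ p.1 ≠ p.2 ∧
      ∀ n, (p.1 ∈ ((eqv i) n).1 ↔ p.2 ∈ ((eqv i) n).1) with hgood
  have step : ∀ (i : O) (up : {j : O // j < i} → X × X), ∃ p : X × X, good i p (prev i up) := by
    intro i up
    obtain ⟨a, b, ha, hb, hab, htype⟩ :=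
      exists_pair_aux h2 E hB (eqv i) (prev i up) (hprevcard i up)
    exact ⟨(a, b), ha, hb, hab, htype⟩
  set F : (i : O) → ((j : O) → j < i → X × X) → X × X :=
    fun i ih => Classical.choose (step i (fun j => ih j.1 j.2)) with hF
  set g : O → X × X := WellFounded.fix wf F with hg
  have hg_eq : ∀ i, g i = Classical.choose (step i (fun j => g j.1)) := by
    intro i
    rw [hg]
    rw [WellFounded.fix_eq]
  have hgood' : ∀ i, good i (g i) (prev i (fun j => g j.1)) := by
    intro i
    rw [hg_eq i]
    exact Classical.choose_spec (step i (fun j => g j.1))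
  -- the subspace
  set Y : Set X := B ∪ {w | ∃ i, w = (g i).2} with hY
  have hxE : ∀ i, (g i).1 ∈ E := fun i => (hgood' i).1.1
  have hyE : ∀ i, (g i).2 ∈ E := fun i => (hgood' i).2.1.1
  have hxnY : ∀ i, (g i).1 ∉ Y := by
    intro i hmem
    rcases hmem with hmB | ⟨j, hj⟩
    · exact (hxE i).2 hmB
    · rcases lt_trichotomy j i with hji | heq | hij
      · exact (hgood' i).1.2 ⟨⟨j, hji⟩, Or.inr hj⟩
      · rw [heq] at hj
        exact (hgood' i).2.2.1 hj
      · exact (hgood' j).2.1.2 ⟨⟨i, hij⟩, Or.inl hj.symm⟩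
  have hxcl : ∀ i, (g i).1 ∈ closure Y := by
    intro i
    have h1' : (g i).1 ∈ closure B := (hxE i).1
    exact closure_mono (subset_union_left) h1'
  refine ⟨Y, ?_⟩
  intro hCS
  obtain ⟨σ, hσ⟩ := sep_necessary Y hCS
  set i := eqv.symm σ with hi
  have heqv : eqv i = σ := eqv.apply_symm_apply σ
  obtain ⟨n, hn⟩ := hσ (g i).1 ⟨hxcl i, hxnY i⟩ (g i).2 (Or.inr ⟨i, rfl⟩)
  have htype : (g i).1 ∈ (σ n).1 ↔ (g i).2 ∈ (σ n).1 := by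
    have := (hgood' i).2.2.2 n
    rwa [heqv] at this
  rcases hn with ⟨ha, hb⟩ | ⟨ha, hb⟩
  · exact hb (htype.mp ha)
  · exact ha (htype.mpr hb)
end

section
/- The completely metrizable space X = (ℶ_ω)^ω, the countable power of the discrete space of cardinality ℶ_ω, contains a (metrizable) subspace Y without countable separation. In particular, there exists a metrizable space without countable separation. -/
open Topology Set

universe u v

/-- The beth numbers with finite index: `ℶ_0 = ℵ₀`, `ℶ_{n+1} = 2 ^ ℶ_n`. -/
def bethNat : ℕ → Cardinal.{0}
  | 0 => Cardinal.aleph0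
  | n + 1 => 2 ^ bethNat n

/-- `ℶ_ω = sup_{n ∈ ω} ℶ_n`. -/
noncomputable def bethOmega : Cardinal.{0} := ⨆ n : ℕ, bethNat n

/-- A (discrete) set of cardinality `ℶ_ω`. -/
noncomputable def BethOmegaType : Type := Quotient.out bethOmega

instance : TopologicalSpace BethOmegaType := ⊥

instance : DiscreteTopology BethOmegaType := ⟨rfl⟩

/-!
Write `κ = ℶ_ω` and `P = κ^ω`. As `ℶ_ω` is a strong limit of countable cofinality,
`2^κ = ∏ₙ 2^ℶₙ ≤ κ^ω = |P|`, so `P` has at least `2^(2^κ)` subsets.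

If `Y ⊆ P` has countable separation, witnessed by `𝒰` in `bY`, then every atom
`⋂_{n ∈ σ} Uₙ ∩ ⋂_{n ∉ σ} (bY \ Uₙ)` of `𝒰` that meets `Y` lies inside `Y`, and these atoms cover
`Y`. An atom is closed ∩ `Gδ` in the compact space `bY`, and compactness transfers this to the
metrizable space `P`: the atom is its `P`-closure intersected with a `Gδ` subset of `P`. As `P`
has a base of `κ` cylinders, it has only `2^κ` open sets, hence every such `Y` is one of at
most `(2^κ)^𝔠 = 2^κ` unions of `𝔠` closed ∩ `Gδ` sets, and some `Y ⊆ P` is not.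
-/

open Cardinal Filter Metric TopologicalSpace

def IsClosedInterGδ {X : Type*} [TopologicalSpace X] (s : Set X) : Prop :=
  ∃ C G : Set X, IsClosed C ∧ IsGδ G ∧ s = C ∩ G

section Counting

variable {P : Type u} [TopologicalSpace P]

theorem TopologicalSpace.IsTopologicalBasis.mk_isOpen_le {B : Set (Set P)}
    (hB : IsTopologicalBasis B) : #{U : Set P // IsOpen U} ≤ 2 ^ #B := by
  have hsub : {U : Set P | IsOpen U} ⊆ range fun S : Set B => ⋃₀ (Subtype.val '' S) := by
    intro U hU
    obtain ⟨S, hSB, rfl⟩ := hB.open_eq_sUnion hU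
    exact ⟨Subtype.val ⁻¹' S, by simp only [Subtype.image_preimage_coe, inter_eq_right.2 hSB]⟩
  calc #{U : Set P // IsOpen U} ≤ #(range fun S : Set B => ⋃₀ (Subtype.val '' S)) :=
        mk_le_mk_of_subset hsub
    _ ≤ #(Set B) := mk_range_le
    _ = 2 ^ #B := mk_set

theorem mk_isClosedInterGδ_le :
    #{s : Set P // IsClosedInterGδ s} ≤ #{U : Set P // IsOpen U} ^ ℵ₀ := by
  have hsub : {s : Set P | IsClosedInterGδ s} ⊆
      range fun U : ℕ → {U : Set P // IsOpen U} =>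
        ((U 0 : Set P)ᶜ ∩ ⋂ n, (U (n + 1) : Set P)) := by
    rintro s ⟨C, G, hC, hG, rfl⟩
    obtain ⟨V, hV, rfl⟩ := isGδ_iff_eq_iInter_nat.mp hG
    refine ⟨fun n => Nat.casesOn n ⟨Cᶜ, hC.isOpen_compl⟩ fun n => ⟨V n, hV n⟩, ?_⟩
    simp
  calc #{s : Set P // IsClosedInterGδ s} ≤ #(range fun U : ℕ → {U : Set P // IsOpen U} =>
        ((U 0 : Set P)ᶜ ∩ ⋂ n, (U (n + 1) : Set P))) := mk_le_mk_of_subset hsub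
    _ ≤ #(ℕ → {U : Set P // IsOpen U}) := mk_range_le
    _ = #{U : Set P // IsOpen U} ^ ℵ₀ := by simp

end Counting

theorem PiNat.mk_cylinders_le (α : Type u) :
    #{s : Set (ℕ → α) | ∃ x n, s = PiNat.cylinder x n} ≤ #(List α) := by
  have hsub : {s : Set (ℕ → α) | ∃ x n, s = PiNat.cylinder x n} ⊆
      range fun l : List α => {y : ℕ → α | ∀ k (hk : k < l.length), y k = l[k]} := by
    rintro s ⟨x, n, rfl⟩
    refine ⟨List.ofFn fun k : Fin n => x k, ?_⟩
    ext y
    simp [PiNat.cylinder]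
  exact (mk_le_mk_of_subset hsub).trans mk_range_le

theorem PiNat.mk_isOpen_le (α : Type u) [TopologicalSpace α] [DiscreteTopology α] :
    #{U : Set (ℕ → α) // IsOpen U} ≤ 2 ^ #(List α) :=
  (PiNat.isTopologicalBasis_cylinders (E := fun _ => α)).mk_isOpen_le.trans
    (power_le_power_left two_ne_zero (PiNat.mk_cylinders_le α))

section Transfer

variable {X P K : Type*} [TopologicalSpace X] [TopologicalSpace K] {i : X → P} {e : X → K}

theorem exists_ball_closure_image_subset [PseudoMetricSpace P] [RegularSpace K]
    (hi : IsInducing i) (he : Continuous e) {x : X} {V : Set K} (hV : V ∈ 𝓝 (e x))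
    {δ : ℝ} (hδ : 0 < δ) : ∃ r ∈ Ioc 0 δ, closure (e '' (i ⁻¹' ball (i x) r)) ⊆ V := by
  obtain ⟨F, hF, hFclosed, hFV⟩ := exists_mem_nhds_isClosed_subset hV
  have hpre : e ⁻¹' F ∈ comap i (𝓝 (i x)) := hi.nhds_eq_comap x ▸ he.continuousAt hF
  obtain ⟨r, hr, hrF⟩ := (nhds_basis_ball.comap i).mem_iff.1 hpre
  refine ⟨min r δ, ⟨lt_min hr hδ, min_le_right _ _⟩, (closure_minimal ?_ hFclosed).trans hFV⟩
  rintro - ⟨y, hy, rfl⟩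
  exact hrF (ball_subset_ball (min_le_left _ _) hy)

theorem mem_image_preimage_of_forall_mem_ball [MetricSpace P] [CompactSpace K]
    (hi : Continuous i) (he : IsInducing e) {C : Set K} {V : ℕ → Set K} (hC : IsClosed C)
    (hrange : C ∩ ⋂ n, V n ⊆ range e) {z : P} (hz : z ∈ closure (i '' (e ⁻¹' (C ∩ ⋂ n, V n))))
    {x : ℕ → P} {r : ℕ → ℝ} (hr : Tendsto r atTop (𝓝 0)) (hzx : ∀ n, z ∈ ball (x n) (r n))
    (hV : ∀ n, closure (e '' (i ⁻¹' ball (x n) (r n))) ⊆ V n) :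
    z ∈ i '' (e ⁻¹' (C ∩ ⋂ n, V n)) := by
  set E : ℕ → Set X := fun n => e ⁻¹' (C ∩ ⋂ n, V n) ∩ ⋂ k ≤ n, i ⁻¹' ball (x k) (r k)
  have hE_anti : Antitone E := fun m n hmn =>
    inter_subset_inter_right _ (biInter_subset_biInter_left fun k (hk : k ≤ m) => hk.trans hmn)
  have hE_ne : ∀ n, (E n).Nonempty := by
    intro n
    have hopen : IsOpen (⋂ k ≤ n, ball (x k) (r k)) :=
      (finite_le_nat n).isOpen_biInter fun k _ => isOpen_ball
    obtain ⟨-, hball, s, hs, rfl⟩ :=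
      mem_closure_iff.1 hz _ hopen (mem_iInter₂.2 fun k _ => hzx k)
    exact ⟨s, hs, by simpa using hball⟩
  have hE_ball : ∀ n, MapsTo i (E n) (ball (x n) (r n)) := fun n s hs =>
    mem_iInter₂.1 hs.2 n le_rfl
  obtain ⟨f, hf⟩ := IsCompact.nonempty_iInter_of_sequence_nonempty_isCompact_isClosed
    (fun n => closure (e '' E n)) (fun n => closure_mono (image_mono (hE_anti n.le_succ)))
    (fun n => ((hE_ne n).image e).closure) isClosed_closure.isCompact fun _ => isClosed_closure
  rw [mem_iInter] at hf
  have hfA : f ∈ C ∩ ⋂ n, V n := by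
    refine ⟨closure_minimal ?_ hC (hf 0), mem_iInter.2 fun n => hV n (closure_mono ?_ (hf n))⟩
    · rintro - ⟨s, hs, rfl⟩
      exact hs.1.1
    · exact image_mono (hE_ball n)
  obtain ⟨y, rfl⟩ := hrange hfA
  have hy : ∀ n, i y ∈ closedBall (x n) (r n) := fun n =>
    closure_ball_subset_closedBall <|
      map_mem_closure hi (he.closure_eq_preimage_closure_image _ ▸ hf n) (hE_ball n)
  have hdist : ∀ n, dist (i y) z ≤ 2 * r n := fun n => by
    linarith [dist_triangle_right (i y) z (x n), mem_closedBall.1 (hy n), mem_ball.1 (hzx n)]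
  have hzero : dist (i y) z ≤ 0 := by
    simpa using ge_of_tendsto' (hr.const_mul 2) hdist
  exact ⟨y, hfA, dist_le_zero.1 hzero⟩

theorem IsClosedInterGδ.image_preimage [TopologicalSpace P] [MetrizableSpace P] [CompactSpace K]
    [RegularSpace K] (hi : IsInducing i) (he : IsInducing e) {A : Set K}
    (hA : IsClosedInterGδ A) (hAe : A ⊆ range e) : IsClosedInterGδ (i '' (e ⁻¹' A)) := by
  let _ := metrizableSpaceMetric P
  obtain ⟨C, G, hC, hG, rfl⟩ := hA
  obtain ⟨V, hV, rfl⟩ := isGδ_iff_eq_iInter_nat.mp hG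
  set O : ℕ → Set P := fun n => {z | ∃ x, ∃ r ≤ 1 / ((n : ℝ) + 1),
    z ∈ ball x r ∧ closure (e '' (i ⁻¹' ball x r)) ⊆ V n}
  have hO : ∀ n, IsOpen (O n) := fun n => isOpen_iff_forall_mem_open.2
    fun z ⟨x, r, hr, hz, hV⟩ => ⟨ball x r, fun w hw => ⟨x, r, hr, hw, hV⟩, isOpen_ball, hz⟩
  have hsub : i '' (e ⁻¹' (C ∩ ⋂ n, V n)) ⊆ ⋂ n, O n := by
    rintro - ⟨s, hs, rfl⟩
    refine mem_iInter.2 fun n => ?_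
    obtain ⟨r, ⟨hr₀, hr⟩, hrV⟩ := exists_ball_closure_image_subset hi he.continuous
      ((hV n).mem_nhds (mem_iInter.1 hs.2 n)) Nat.one_div_pos_of_nat
    exact ⟨i s, r, hr, mem_ball_self hr₀, hrV⟩
  have hsupset :
      closure (i '' (e ⁻¹' (C ∩ ⋂ n, V n))) ∩ ⋂ n, O n ⊆ i '' (e ⁻¹' (C ∩ ⋂ n, V n)) := by
    rintro z ⟨hz, hzO⟩
    choose x r hr hzx hxV using mem_iInter.1 hzO
    have hr₀ : Tendsto r atTop (𝓝 0) :=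
      squeeze_zero (fun n => (dist_nonneg.trans_lt (hzx n)).le) hr
        tendsto_one_div_add_atTop_nhds_zero_nat
    exact mem_image_preimage_of_forall_mem_ball hi.continuous he hC hAe hz hr₀ hzx hxV
  exact ⟨_, _, isClosed_closure, .iInter_of_isOpen hO,
    (subset_inter subset_closure hsub).antisymm hsupset⟩

end Transfer

theorem SeparatesFrom.mem_of_forall_mem_iff {K : Type*} {𝒰 : ℕ → Set K} {S : Set K}
    (h : SeparatesFrom 𝒰 S) {x y : K} (hxy : ∀ n, x ∈ 𝒰 n ↔ y ∈ 𝒰 n) (hx : x ∈ S) : y ∈ S := by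
  by_contra hy
  obtain ⟨n, hn | hn⟩ := h x hx y hy
  · exact hn.2 ((hxy n).1 hn.1)
  · exact hn.1 ((hxy n).2 hn.2)

theorem HasCountableSeparation.exists_eq_iUnion {P : Type u} [TopologicalSpace P]
    [MetrizableSpace P] {Y : Set P} (h : HasCountableSeparation Y) :
    ∃ F : Set ℕ → Set P, (∀ σ, IsClosedInterGδ (F σ)) ∧ Y = ⋃ σ, F σ := by
  classical
  obtain ⟨K, tK, hK, hK₂, e, he, -, 𝒰, h𝒰, hsep⟩ := h
  let A : Set ℕ → Set K := fun σ => (⋂ n ∉ σ, (𝒰 n)ᶜ) ∩ ⋂ n ∈ σ, 𝒰 n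
  have hA : ∀ σ k, k ∈ A σ ↔ ∀ n, k ∈ 𝒰 n ↔ n ∈ σ := fun σ k => by
    simp only [A, mem_inter_iff, mem_iInter₂, mem_compl_iff, ← forall_and]
    exact forall_congr' fun n => by tauto
  refine ⟨fun σ => if A σ ⊆ range e then Subtype.val '' (e ⁻¹' A σ) else ∅, fun σ => ?_, ?_⟩
  · dsimp only
    split_ifs with hσ
    · exact IsClosedInterGδ.image_preimage IsInducing.subtypeVal he.isInducing
        ⟨_, _, isClosed_biInter fun n _ => (h𝒰 n).isClosed_compl,
          .biInter_of_isOpen (to_countable σ) fun n _ => h𝒰 n, rfl⟩ hσ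
    · exact ⟨∅, univ, isClosed_empty, .univ, (empty_inter _).symm⟩
  · ext p
    refine ⟨fun hp => mem_iUnion.2 ⟨{n | e ⟨p, hp⟩ ∈ 𝒰 n}, ?_⟩, fun hp => ?_⟩
    · have hpA : e ⟨p, hp⟩ ∈ A {n | e ⟨p, hp⟩ ∈ 𝒰 n} := (hA _ _).2 fun n => Iff.rfl
      have hAe : A {n | e ⟨p, hp⟩ ∈ 𝒰 n} ⊆ range e := fun k hk =>
        hsep.mem_of_forall_mem_iff (fun n => ((hA _ _).1 hpA n).trans ((hA _ _).1 hk n).symm)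
          (mem_range_self _)
      rw [if_pos hAe]
      exact ⟨⟨p, hp⟩, hpA, rfl⟩
    · obtain ⟨σ, hσ⟩ := mem_iUnion.1 hp
      split_ifs at hσ
      · obtain ⟨y, -, rfl⟩ := hσ
        exact y.2
      · exact absurd hσ (notMem_empty p)

theorem exists_not_hasCountableSeparation (α : Type u) [TopologicalSpace α] [DiscreteTopology α]
    (hc : 𝔠 ≤ #α) (h2 : 2 ^ #α ≤ #α ^ ℵ₀) : ∃ Y : Set (ℕ → α), ¬ HasCountableSeparation Y := by
  have hα : ℵ₀ ≤ #α := aleph0_le_continuum.trans hc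
  have : Infinite α := infinite_iff.2 hα
  have hD : #{s : Set (ℕ → α) // IsClosedInterGδ s} ≤ 2 ^ #α := calc
    _ ≤ #{U : Set (ℕ → α) // IsOpen U} ^ ℵ₀ := mk_isClosedInterGδ_le
    _ ≤ (2 ^ #α) ^ ℵ₀ := power_le_power_right (mk_list_eq_mk α ▸ PiNat.mk_isOpen_le α)
    _ = 2 ^ #α := by rw [← power_mul, mul_aleph0_eq hα]
  have hsub : {Y : Set (ℕ → α) | HasCountableSeparation Y} ⊆
      range fun F : Set ℕ → {s : Set (ℕ → α) // IsClosedInterGδ s} =>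
        ⋃ σ, (F σ : Set (ℕ → α)) := by
    intro Y hY
    obtain ⟨F, hF, rfl⟩ := HasCountableSeparation.exists_eq_iUnion hY
    exact ⟨fun σ => ⟨F σ, hF σ⟩, rfl⟩
  have hcount : #{Y : Set (ℕ → α) | HasCountableSeparation Y} ≤ 2 ^ #α := calc
    _ ≤ #(Set ℕ → {s : Set (ℕ → α) // IsClosedInterGδ s}) :=
      (mk_le_mk_of_subset hsub).trans mk_range_le
    _ = #{s : Set (ℕ → α) // IsClosedInterGδ s} ^ 𝔠 := by simp
    _ ≤ (2 ^ #α) ^ 𝔠 := power_le_power_right hD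
    _ = 2 ^ #α := by rw [← power_mul, mul_eq_left hα hc continuum_ne_zero]
  by_contra! hall
  have : (2 : Cardinal) ^ (2 : Cardinal) ^ #α ≤ 2 ^ #α := calc
    (2 : Cardinal) ^ (2 : Cardinal) ^ #α ≤ 2 ^ #(ℕ → α) :=
      power_le_power_left two_ne_zero (by simpa using h2)
    _ = #{Y : Set (ℕ → α) | HasCountableSeparation Y} := by simp [hall]
    _ ≤ 2 ^ #α := hcount
  exact (cantor _).not_ge this

theorem bethNat_le_bethOmega (n : ℕ) : bethNat n ≤ bethOmega :=
  le_ciSup bddAbove_of_small n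

theorem continuum_le_bethOmega : 𝔠 ≤ bethOmega :=
  bethNat_le_bethOmega 1

theorem two_power_bethOmega_le : 2 ^ bethOmega ≤ bethOmega ^ ℵ₀ := calc
  2 ^ bethOmega ≤ 2 ^ sum bethNat := power_le_power_left two_ne_zero (iSup_le_sum bethNat)
  _ = prod fun n => 2 ^ bethNat n := power_sum 2 bethNat
  _ ≤ prod fun _ : ℕ => bethOmega := prod_le_prod _ _ fun n => bethNat_le_bethOmega (n + 1)
  _ = bethOmega ^ ℵ₀ := by rw [prod_const', mk_nat]

/-- The completely metrizable space `(ℶ_ω)^ω` (the countable power of the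
discrete space of cardinality `ℶ_ω`) contains a metrizable subspace without countable
separation; in particular there exists a metrizable space without countable separation. -/
theorem exists_metrizable_subspace_without_countableSeparation :
    ∃ Y : Set (ℕ → BethOmegaType),
      TopologicalSpace.MetrizableSpace ↥Y ∧ ¬ HasCountableSeparation ↥Y := by
  have hmk : #BethOmegaType = bethOmega := mk_out bethOmega
  obtain ⟨Y, hY⟩ := exists_not_hasCountableSeparation BethOmegaType
    (hmk ▸ continuum_le_bethOmega) (hmk ▸ two_power_bethOmega_le)
  exact ⟨Y, inferInstance, hY⟩
end

section
/- Every metrizable topological space of density at most 𝔠 (the cardinality of the continuum) has countable separation. -/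
open Topology Set

universe u v

/-!
Metrize `X` and pass to its completion `Y`. A complete metric space is a `Gδ` in the
compactification obtained by closing the image of `y ↦ edist y ·` in `[0, ∞]^Y`: a point `φ` of
the closure with `inf φ = 0` is a distance function, because the points where `φ` is small form a
Cauchy filter whose limit `x` satisfies `φ = edist x`. Density at most `𝔠` gives countably many
open subsets of `Y` separating its points: by Stone's theorem the cover by balls of radius
`1 / (k + 1)` centred in the dense set has a locally finite open refinement, and colouring its
members by an injection of the dense set into `ℝ` and grouping them along a countable basis of
`ℝ` gives countably many open sets. Extended to the compactification, these sets together with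
the open sets whose intersection is `Y` separate `X` from the remainder.
-/

open scoped ENNReal Cardinal
open Filter TopologicalSpace Function UniformSpace

section CountableSeparation

variable {A Z ι : Type*} [TopologicalSpace Z] [SecondCountableTopology Z] [T1Space Z]

theorem exists_mem_countableBasis_separates {v : ι → Set A} {c : ι → Z} (hc : Injective c)
    {x y : A} {i : ι} (hfin : {j | y ∈ v j}.Finite) (hx : x ∈ v i) (hy : y ∉ v i) :
    ∃ O ∈ countableBasis Z, x ∈ ⋃ j ∈ c ⁻¹' O, v j ∧ y ∉ ⋃ j ∈ c ⁻¹' O, v j := by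
  have hci : c i ∉ c '' {j | y ∈ v j} := fun ⟨j, hyj, hji⟩ => hy (hc hji ▸ hyj)
  obtain ⟨O, hO, hiO, hOF⟩ := (isBasis_countableBasis Z).exists_subset_of_mem_open hci
    (hfin.image c).isClosed.isOpen_compl
  refine ⟨O, hO, mem_biUnion hiO hx, fun hyO => ?_⟩
  obtain ⟨j, hjO, hyj⟩ := mem_iUnion₂.1 hyO
  exact hOF hjO (mem_image_of_mem c hyj)

theorem hasCountableSeparatingOn_isOpen_of_injective [TopologicalSpace A] [MetrizableSpace A]
    {s : Set A} (hs : Dense s) {c : s → Z} (hc : Injective c) :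
    HasCountableSeparatingOn A IsOpen univ := by
  let := metrizableSpaceMetric A
  have hcover (k : ℕ) : ⋃ i : s, Metric.ball (i : A) (1 / (k + 1)) = univ := by
    rw [← (Metric.dense_iff_iUnion_ball s).1 hs _ Nat.one_div_pos_of_nat, biUnion_eq_iUnion]
  choose v hvo hvc hvlf hvball using
    fun k : ℕ => precise_refinement _ (fun _ => Metric.isOpen_ball) (hcover k)
  refine ⟨⟨(fun p : ℕ × Set Z => ⋃ j ∈ c ⁻¹' p.2, v p.1 j) '' (univ ×ˢ countableBasis Z),
    (countable_univ.prod (countable_countableBasis Z)).image _, ?_, ?_⟩⟩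
  · rintro _ ⟨p, -, rfl⟩
    exact isOpen_biUnion fun j _ => hvo p.1 j
  · intro x _ y _ hxy
    by_contra hne
    obtain ⟨k, hk⟩ := exists_nat_one_div_lt (half_pos (dist_pos.2 hne))
    obtain ⟨i, hxi⟩ := mem_iUnion.1 ((hvc k).symm ▸ mem_univ x)
    have hyi : y ∉ v k i := fun hyi => by
      have hxi' := hvball k i hxi
      have hyi' := hvball k i hyi
      rw [Metric.mem_ball] at hxi' hyi'
      linarith [dist_triangle_right x y i]
    obtain ⟨O, hO, hxO, hyO⟩ :=
      exists_mem_countableBasis_separates hc ((hvlf k).point_finite y) hxi hyi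
    exact hyO ((hxy _ ⟨(k, O), ⟨trivial, hO⟩, rfl⟩).1 hxO)

end CountableSeparation

theorem hasCountableSeparatingOn_isOpen_of_dense_mk_le_continuum {A : Type*} [TopologicalSpace A]
    [MetrizableSpace A] {s : Set A} (hs : Dense s) (hcard : #s ≤ 𝔠) :
    HasCountableSeparatingOn A IsOpen univ := by
  obtain ⟨c⟩ : Nonempty (s ↪ ℝ) := by
    rwa [← Cardinal.lift_mk_le', Cardinal.mk_real, Cardinal.lift_continuum, Cardinal.lift_uzero]
  exact hasCountableSeparatingOn_isOpen_of_injective hs c.injective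

theorem Topology.IsInducing.hasCountableSeparatingOn_range {Y K : Type*} [TopologicalSpace Y]
    [TopologicalSpace K] {f : Y → K} (hf : IsInducing f) [HasCountableSeparatingOn Y IsOpen univ] :
    HasCountableSeparatingOn K IsOpen (range f) := by
  obtain ⟨S, hSc, hSo, hS⟩ := exists_countable_separating Y IsOpen univ
  choose! V hVo hV using fun u (hu : u ∈ S) => hf.isOpen_iff.1 (hSo u hu)
  refine ⟨⟨V '' S, hSc.image V, forall_mem_image.2 hVo, ?_⟩⟩
  rintro _ ⟨a, rfl⟩ _ ⟨b, rfl⟩ hab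
  refine congrArg f (hS a trivial b trivial fun u hu => ?_)
  rw [← hV u hu]
  exact hab _ (mem_image_of_mem V hu)

theorem exists_separatesFrom_of_isGδ {K : Type*} [TopologicalSpace K] {S M : Set K} (hSM : S ⊆ M)
    (hM : IsGδ M) [HasCountableSeparatingOn K IsOpen M] :
    ∃ 𝒰 : ℕ → Set K, (∀ n, IsOpen (𝒰 n)) ∧ SeparatesFrom 𝒰 S := by
  obtain ⟨T, hTo, hTc, rfl⟩ := hM
  obtain ⟨U, hUne, hUc, hUo, hU⟩ := exists_nonempty_countable_separating K isOpen_empty (⋂₀ T)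
  obtain ⟨𝒰, h𝒰⟩ := (hUc.union hTc).exists_eq_range (hUne.mono subset_union_left)
  refine ⟨𝒰, forall_mem_range.1 (h𝒰 ▸ fun u hu => hu.elim (hUo u) (hTo u)), fun x hx y hy => ?_⟩
  suffices ∃ u ∈ U ∪ T, ¬(x ∈ u ↔ y ∈ u) by
    obtain ⟨_, ⟨n, rfl⟩, hn⟩ := h𝒰 ▸ this
    exact ⟨n, by tauto⟩
  by_cases hyM : y ∈ ⋂₀ T
  · by_contra! h
    exact hy (hU x (hSM hx) y hyM (fun u hu => h u (Or.inl hu)) ▸ hx)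
  · obtain ⟨t, ht, hyt⟩ := not_forall₂.1 hyM
    exact ⟨t, Or.inr ht, fun h => hyt (h.1 (hSM hx t ht))⟩

section EdistCompactification

variable (Y : Type*) [EMetricSpace Y]

theorem isEmbedding_edist : IsEmbedding (edist : Y → Y → ℝ≥0∞) := by
  have hcont : Continuous (edist : Y → Y → ℝ≥0∞) :=
    continuous_pi fun j => continuous_id.edist continuous_const
  refine ⟨isInducing_iff_nhds.2 fun x => le_antisymm (hcont.tendsto x).le_comap ?_, ?_⟩
  · intro u hu
    obtain ⟨ε, hε, hball⟩ := EMetric.mem_nhds_iff.1 hu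
    refine mem_comap.2 ⟨{φ | φ x < ε}, (isOpen_lt (continuous_apply x) continuous_const).mem_nhds
      (by simpa using hε), fun _ hy => hball hy⟩
  · intro x y hxy
    simpa using congrFun hxy y

theorem closure_range_edist_subset : closure (range (edist : Y → Y → ℝ≥0∞)) ⊆
    {φ | ∀ i j, φ j ≤ φ i + edist i j ∧ edist i j ≤ φ i + φ j} := by
  refine closure_minimal ?_ ?_
  · rintro _ ⟨x, rfl⟩ i j
    exact ⟨edist_triangle x i j, edist_triangle_left i j x⟩
  · simp only [ofPred_forall]
    refine isClosed_iInter fun i => isClosed_iInter fun j => IsClosed.inter ?_ ?_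
    · exact isClosed_le (continuous_apply j) ((continuous_apply i).add continuous_const)
    · exact isClosed_le continuous_const ((continuous_apply i).add (continuous_apply j))

variable {Y} in
theorem mem_range_edist_of_mem_closure [CompleteSpace Y] {φ : Y → ℝ≥0∞}
    (hφ : φ ∈ closure (range edist)) (h0 : ∀ ε > 0, ∃ y, φ y < ε) : φ ∈ range edist := by
  have hφ' := closure_range_edist_subset Y hφ
  have : (comap φ (𝓝 0)).NeBot := comap_neBot fun u hu => by
    obtain ⟨ε, hε, hεu⟩ := ENNReal.nhds_zero_basis.mem_iff.1 hu
    obtain ⟨y, hy⟩ := h0 ε hε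
    exact ⟨y, hεu hy⟩
  have hcauchy : Cauchy (comap φ (𝓝 0)) := by
    refine EMetric.cauchy_iff.2 ⟨NeBot.ne ‹_›, fun ε hε => ⟨{y | φ y < ε / 2},
      preimage_mem_comap (Iio_mem_nhds (ENNReal.half_pos hε.ne')), fun a ha b hb => ?_⟩⟩
    calc edist a b ≤ φ a + φ b := (hφ' a b).2
      _ < ε / 2 + ε / 2 := ENNReal.add_lt_add ha hb
      _ = ε := ENNReal.add_halves ε
  obtain ⟨x, hx⟩ := CompleteSpace.complete hcauchy
  have hsmall : Tendsto φ (comap φ (𝓝 0)) (𝓝 0) := tendsto_comap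
  refine ⟨x, funext fun j => ?_⟩
  have hlim : Tendsto (fun y => edist y j) (comap φ (𝓝 0)) (𝓝 (edist x j)) :=
    ((continuous_id.edist continuous_const).tendsto x).mono_left hx
  refine le_antisymm ?_ ?_
  · simpa using le_of_tendsto_of_tendsto' hlim (hsmall.add tendsto_const_nhds)
      fun y => (hφ' y j).2
  · simpa using le_of_tendsto_of_tendsto' tendsto_const_nhds (hsmall.add hlim)
      fun y => (hφ' y j).1

abbrev EdistCompactification : Type _ := closure (range (edist : Y → Y → ℝ≥0∞))

instance : CompactSpace (EdistCompactification Y) :=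
  isCompact_iff_compactSpace.1 isClosed_closure.isCompact

def toEdistCompactification : Y → EdistCompactification Y :=
  codRestrict edist _ fun y => subset_closure (mem_range_self y)

theorem isEmbedding_toEdistCompactification : IsEmbedding (toEdistCompactification Y) :=
  (isEmbedding_edist Y).codRestrict _ _

theorem denseRange_toEdistCompactification : DenseRange (toEdistCompactification Y) :=
  Subtype.dense_iff.2 (by rw [← range_comp]; exact subset_rfl)

theorem isGδ_range_toEdistCompactification [CompleteSpace Y] :
    IsGδ (range (toEdistCompactification Y)) := by
  have hopen (n : ℕ) : IsOpen {ψ : EdistCompactification Y | ∃ y, ψ.1 y < (n : ℝ≥0∞)⁻¹} := by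
    simp only [ofPred_exists]
    exact isOpen_iUnion fun y =>
      isOpen_lt ((continuous_apply y).comp continuous_subtype_val) continuous_const
  convert IsGδ.iInter_of_isOpen hopen
  ext ψ
  simp only [mem_iInter, mem_ofPred_eq]
  refine ⟨?_, fun h => ?_⟩
  · rintro ⟨x, rfl⟩ n
    exact ⟨x, by simp [toEdistCompactification]⟩
  · obtain ⟨x, hx⟩ := mem_range_edist_of_mem_closure ψ.2 fun ε hε => by
      obtain ⟨n, hn⟩ := ENNReal.exists_inv_nat_lt hε.ne'
      obtain ⟨y, hy⟩ := h n
      exact ⟨y, hy.trans hn⟩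
    exact ⟨x, Subtype.ext hx⟩

end EdistCompactification

/-- Every metrizable space of density at most `𝔠` (i.e. having a dense
subset of cardinality at most the continuum) has countable separation. -/
theorem hasCountableSeparation_of_metrizable_density_le_continuum (X : Type u)
    [TopologicalSpace X] [TopologicalSpace.MetrizableSpace X]
    (h : ∃ s : Set X, Dense s ∧ Cardinal.mk ↥s ≤ Cardinal.continuum.{u}) :
    HasCountableSeparation X := by
  let := metrizableSpaceMetric X
  obtain ⟨s, hs, hcard⟩ := h
  let Y := Completion X
  have : HasCountableSeparatingOn Y IsOpen univ :=
    hasCountableSeparatingOn_isOpen_of_dense_mk_le_continuum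
      (Completion.denseRange_coe.dense_image (Completion.continuous_coe X) hs)
      (Cardinal.mk_image_le.trans hcard)
  have := (isEmbedding_toEdistCompactification Y).isInducing.hasCountableSeparatingOn_range
  exact ⟨EdistCompactification Y, _, inferInstance, inferInstance, toEdistCompactification Y ∘ (↑),
    (isEmbedding_toEdistCompactification Y).comp
      (Completion.isUniformEmbedding_coe X).isEmbedding,
    (denseRange_toEdistCompactification Y).comp Completion.denseRange_coe
      (isEmbedding_toEdistCompactification Y).continuous,
    exists_separatesFrom_of_isGδ (range_comp_subset_range _ _)
      (isGδ_range_toEdistCompactification Y)⟩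
end

section
/- Every Baire strictly fragmentable topological space X contains a dense G_δ subset G such that G, with the subspace topology, is metrizable (in fact the subspace topology on G is generated by the fragmenting metric). -/
open Topology Set

universe u v

/-! Let `G` be the set of points having neighbourhoods of arbitrarily small `d`-diameter, i.e. the
intersection over `n` of the union `Oₙ` of all open sets of `d`-diameter `< 1/(n+1)`. Each `Oₙ` is
open and, by fragmentability, dense, so `G` is a dense `Gδ` in the Baire space `X`. By the triangle
inequality every `d`-ball containing a point of `G` is a neighbourhood of it, so on `G` the subspace
topology is finer than the ball topology; the converse holds on all of `X` since `d` is strict. -/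

abbrev ballTopology {X : Type*} (d : X → X → ℝ) : TopologicalSpace X :=
  TopologicalSpace.generateFrom {B : Set X | ∃ x : X, ∃ ε : ℝ, 0 < ε ∧ B = {y | d x y < ε}}

namespace IsMetric

variable {X : Type*} {d : X → X → ℝ}

abbrev toMetricSpace (hd : IsMetric d) : MetricSpace X where
  dist := d
  dist_self := hd.self
  dist_comm := hd.symm
  dist_triangle := hd.triangle
  eq_of_dist_eq_zero {x y} := hd.eq_of x y

theorem toMetricSpace_topology_eq (hd : IsMetric d) :
    hd.toMetricSpace.toUniformSpace.toTopologicalSpace = ballTopology d := by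
  let := hd.toMetricSpace
  have ball_eq : ∀ x ε, {y | d x y < ε} = Metric.ball x ε := fun x ε => by
    ext y
    change d x y < ε ↔ d y x < ε
    rw [hd.symm]
  refine (TopologicalSpace.isTopologicalBasis_of_isOpen_of_nhds ?_ ?_).eq_generateFrom
  · rintro B ⟨x, ε, -, rfl⟩
    exact ball_eq x ε ▸ Metric.isOpen_ball
  · intro x U hxU hU
    obtain ⟨ε, hε, hball⟩ := Metric.isOpen_iff.1 hU x hxU
    exact ⟨_, ⟨x, ε, hε, rfl⟩, by simpa [ball_eq] using hε, ball_eq x ε ▸ hball⟩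

theorem metrizableSpace_induced_ballTopology (hd : IsMetric d) (G : Set X) :
    @TopologicalSpace.MetrizableSpace G ((ballTopology d).induced (↑)) := by
  let := hd.toMetricSpace
  rw [← hd.toMetricSpace_topology_eq]
  infer_instance

end IsMetric

section

variable {X : Type*} [TopologicalSpace X] {d : X → X → ℝ}

theorem MetricTopFiner.ballTopology_le (hself : ∀ x, d x x = 0) (hfiner : MetricTopFiner X d) :
    ballTopology d ≤ ‹TopologicalSpace X› := by
  intro U hU
  refine (@isOpen_iff_forall_mem_open X (ballTopology d) U).2 fun x hx => ?_
  obtain ⟨ε, hε, hball⟩ := hfiner U hU x hx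
  exact ⟨_, hball, .basic _ ⟨x, ε, hε, rfl⟩, show d x x < ε by rwa [hself]⟩

def smallDiamOpen (d : X → X → ℝ) (ε : ℝ) : Set X :=
  ⋃₀ {U | IsOpen U ∧ ∀ x ∈ U, ∀ y ∈ U, d x y < ε}

theorem isOpen_smallDiamOpen (ε : ℝ) : IsOpen (smallDiamOpen d ε) :=
  isOpen_sUnion fun _ hU => hU.1

theorem smallDiamOpen_mono {ε ε' : ℝ} (h : ε ≤ ε') : smallDiamOpen d ε ⊆ smallDiamOpen d ε' :=
  sUnion_mono fun _ hU => ⟨hU.1, fun x hx y hy => (hU.2 x hx y hy).trans_le h⟩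

theorem FragmentedBy.dense_smallDiamOpen (hfrag : FragmentedBy X d) {ε : ℝ} (hε : 0 < ε) :
    Dense (smallDiamOpen d ε) := by
  refine dense_iff_inter_open.2 fun W hW hWne => ?_
  obtain ⟨V, hV, ⟨z, hz⟩, hdiam⟩ := hfrag ε hε W hWne
  exact ⟨z, hz.1, W ∩ V, ⟨hW.inter hV, hdiam⟩, hz⟩

def smallDiamKernel (d : X → X → ℝ) : Set X :=
  ⋂ n : ℕ, smallDiamOpen d (1 / (n + 1))

theorem isGδ_smallDiamKernel : IsGδ (smallDiamKernel d) :=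
  .iInter_of_isOpen fun _ => isOpen_smallDiamOpen _

theorem FragmentedBy.dense_smallDiamKernel [BaireSpace X] (hfrag : FragmentedBy X d) :
    Dense (smallDiamKernel d) :=
  dense_iInter_of_isOpen (fun _ => isOpen_smallDiamOpen _)
    fun _ => hfrag.dense_smallDiamOpen Nat.one_div_pos_of_nat

theorem mem_smallDiamOpen_of_mem_smallDiamKernel {g : X} (hg : g ∈ smallDiamKernel d) {ε : ℝ}
    (hε : 0 < ε) : g ∈ smallDiamOpen d ε := by
  obtain ⟨n, hn⟩ := exists_nat_one_div_lt hε
  exact smallDiamOpen_mono hn.le (mem_iInter.1 hg n)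

theorem ball_mem_nhds_of_mem_smallDiamKernel (htri : ∀ x y z, d x z ≤ d x y + d y z) {x g : X}
    {ε : ℝ} (hg : g ∈ smallDiamKernel d) (hxg : d x g < ε) : {y | d x y < ε} ∈ 𝓝 g := by
  obtain ⟨U, ⟨hU, hdiam⟩, hgU⟩ :=
    mem_smallDiamOpen_of_mem_smallDiamKernel hg (sub_pos.2 hxg)
  refine Filter.mem_of_superset (hU.mem_nhds hgU) fun y hy => show d x y < ε from ?_
  linarith [htri x g y, hdiam g hgU y hy]

theorem continuous_subtypeVal_ballTopology (htri : ∀ x y z, d x z ≤ d x y + d y z) :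
    Continuous[_, ballTopology d] (Subtype.val : smallDiamKernel d → X) := by
  refine continuous_generateFrom_iff.2 ?_
  rintro _ ⟨x, ε, -, rfl⟩
  refine isOpen_iff_mem_nhds.2 fun g hg => ?_
  rw [nhds_subtype]
  exact Filter.preimage_mem_comap (ball_mem_nhds_of_mem_smallDiamKernel htri g.2 hg)

end

/-- Every Baire space `X` which is strictly fragmented by a metric `d`
contains a dense `Gδ`-subset `G` which is metrizable in the subspace topology; in fact the
subspace topology of `G` coincides with the topology generated by the fragmenting metric `d`
restricted to `G`. -/
theorem baire_strictlyFragmentable_dense_metrizable_Gdelta (X : Type u)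
    [tX : TopologicalSpace X] [BaireSpace X] (d : X → X → ℝ)
    (hd : StrictlyFragmentedBy X d) :
    ∃ G : Set X, IsGδ G ∧ Dense G ∧ TopologicalSpace.MetrizableSpace ↥G ∧
      (inferInstance : TopologicalSpace ↥G) =
        TopologicalSpace.induced (Subtype.val : ↥G → X)
          (TopologicalSpace.generateFrom
            {B : Set X | ∃ x : X, ∃ ε : ℝ, 0 < ε ∧ B = {y | d x y < ε}}) := by
  obtain ⟨hmetric, hfrag, hfiner⟩ := hd
  have htop : (instTopologicalSpaceSubtype : TopologicalSpace (smallDiamKernel d)) =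
      (ballTopology d).induced Subtype.val :=
    le_antisymm (continuous_iff_le_induced.1 (continuous_subtypeVal_ballTopology hmetric.triangle))
      (induced_mono (hfiner.ballTopology_le hmetric.self))
  refine ⟨smallDiamKernel d, isGδ_smallDiamKernel, hfrag.dense_smallDiamKernel, ?_, htop⟩
  rw [htop]
  exact hmetric.metrizableSpace_induced_ballTopology _
end
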